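/- arXiv:0810.4957 — 5 statements merged into one kernel-verified Lean document; each statement's English description precedes it below -/
import Mathlib

section
/- (Martingale Representation) For any {F_t}-adapted R^K-valued martingale L, there exists an adapted R^{K×N}-valued process Z such that L_{t+1} = L_0 + ∑_{0≤u≤t} Z_u M_{u+1} for all t, and Z is unique up to the equivalence ∼_M. -/
/-!
Since `𝓕 (u + 1)` is generated by the history `X 0, …, X (u + 1)`, the value `L (u + 1)` is a
function of that history; freezing its last entry at the `j`-th basis vector gives
`𝓕 u`-measurable `G j` with `L (u + 1) = G j` on `{X (u + 1) = e j}`, i.e.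
`L (u + 1) = ∑ j, X (u + 1) j • G j`. Conditioning on `𝓕 u` and pulling out the `G j` gives
`L u = ∑ j, G j * μ[X (u + 1) j | 𝓕 u]`, while `∑ j, μ[X (u + 1) j | 𝓕 u] = 1`; hence
`Z u i j := G j i - L u i` satisfies `Z u • M (u + 1) = L (u + 1) - L u`. Any representation
has these same increments, which gives uniqueness.
-/

open MeasureTheory

lemma forall_succ_eq_add_sum_range_iff {G : Type*} [AddCommGroup G] (s d : ℕ → G) :
    (∀ t, s (t + 1) = s 0 + ∑ u ∈ Finset.range (t + 1), d u) ↔ ∀ u, d u = s (u + 1) - s u := by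
  constructor
  · intro h u
    cases u with
    | zero => simpa [eq_sub_iff_add_eq, add_comm] using (h 0).symm
    | succ v => rw [h, h, Finset.sum_range_succ _ (v + 1)]; abel
  · intro h t
    rw [Finset.sum_congr rfl fun u _ => h u, Finset.sum_range_sub]
    abel

lemma measurable_snoc_const {β : Type*} [MeasurableSpace β] {n : ℕ} (b : β) :
    Measurable fun y : Fin n → β => (Fin.snoc y b : Fin (n + 1) → β) := by
  refine measurable_pi_lambda _ fun s => ?_
  induction s using Fin.lastCases with
  | last => simp
  | cast s => simpa using measurable_pi_apply s

lemma exists_comap_factor_of_measurable_comap_snoc {Ω β E : Type*} [MeasurableSpace β]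
    [MeasurableSpace E] [StandardBorelSpace E] [Nonempty E] {n : ℕ} (P : Ω → Fin n → β)
    (V : Ω → β) {f : Ω → E}
    (hf : Measurable[MeasurableSpace.comap (fun ω => (Fin.snoc (P ω) (V ω) : Fin (n + 1) → β))
      inferInstance] f) :
    ∃ g : β → Ω → E, (∀ b, Measurable[MeasurableSpace.comap P inferInstance] (g b)) ∧
      ∀ ω, f ω = g (V ω) ω := by
  obtain ⟨h, hh, rfl⟩ := hf.exists_eq_measurable_comp
  exact ⟨fun b ω => h (Fin.snoc (P ω) b),
    fun b => hh.comp ((measurable_snoc_const b).comp (comap_measurable P)), fun _ => rfl⟩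

section CondExp

variable {Ω ι : Type*} [Fintype ι] {m m0 : MeasurableSpace Ω} {μ : Measure Ω} {ξ : Ω → ι → ℝ}

lemma condExp_pi_apply (hξ : Integrable ξ μ) (j : ι) :
    (fun ω => μ[ξ|m] ω j) =ᵐ[μ] μ[fun ω => ξ ω j|m] :=
  (ContinuousLinearMap.proj j).comp_condExp_comm hξ

lemma integrable_of_forall_eq_single [DecidableEq ι] [IsFiniteMeasure μ] (hξm : Measurable ξ)
    (hξ : ∀ ω, ∃ i, ξ ω = Pi.single i 1) : Integrable ξ μ := by
  refine .of_bound hξm.aestronglyMeasurable 1 (.of_forall fun ω => ?_)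
  obtain ⟨i, hi⟩ := hξ ω
  simp [hi, Pi.norm_single]

lemma sum_condExp_ae_eq_one [IsFiniteMeasure μ] (hm : m ≤ m0) (hξ : Integrable ξ μ)
    (hξ_sum : ∀ ω, ∑ j, ξ ω j = 1) : ∀ᵐ ω ∂μ, ∑ j, μ[ξ|m] ω j = 1 := by
  let T : (ι → ℝ) →L[ℝ] ℝ := ∑ j, ContinuousLinearMap.proj j
  have hTξ : T ∘ ξ = fun _ => 1 := by
    funext ω
    simp [T, hξ_sum]
  filter_upwards [T.comp_condExp_comm (m := m) hξ] with ω hω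
  simpa [T, hTξ, condExp_const hm] using hω

lemma sum_mul_condExp_ae_eq_condExp_sum {G : ι → Ω → ℝ} (hG : ∀ j, StronglyMeasurable[m] (G j))
    (hξ : Integrable ξ μ) (hGξ : ∀ j, Integrable (fun ω => G j ω * ξ ω j) μ) :
    ∀ᵐ ω ∂μ, ∑ j, G j ω * μ[ξ|m] ω j = μ[fun ω => ∑ j, G j ω * ξ ω j|m] ω := by
  have hsum := condExp_finsetSum (m := m) (s := Finset.univ) (fun j _ => hGξ j)
  have hpull : ∀ j, μ[fun ω => G j ω * ξ ω j|m] =ᵐ[μ] fun ω => G j ω * μ[ξ|m] ω j := fun j => by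
    filter_upwards [condExp_mul_of_stronglyMeasurable_left (hG j) (hGξ j) (hξ.eval j),
      condExp_pi_apply (m := m) hξ j] with ω h1 h2
    exact h1.trans (congrArg _ h2.symm)
  have hfun : (fun ω => ∑ j, G j ω * ξ ω j) = ∑ j, fun ω => G j ω * ξ ω j := by
    funext ω
    simp
  filter_upwards [hsum, ae_all_iff.2 hpull] with ω h1 h2
  rw [hfun, h1, Finset.sum_apply]
  exact Finset.sum_congr rfl fun j _ => (h2 j).symm

lemma sum_mul_sub_condExp_ae_eq [DecidableEq ι] [IsFiniteMeasure μ] (hm : m ≤ m0)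
    (hξ : ∀ ω, ∃ i, ξ ω = Pi.single i 1) (hξ_int : Integrable ξ μ)
    {Y : Ω → ℝ} (hY : Integrable Y μ) {G : ι → Ω → ℝ} (hG : ∀ j, StronglyMeasurable[m] (G j))
    (hGY : ∀ j ω, ξ ω = Pi.single j 1 → G j ω = Y ω) :
    ∀ᵐ ω ∂μ, ∑ j, (G j ω - μ[Y|m] ω) * (ξ ω j - μ[ξ|m] ω j) = Y ω - μ[Y|m] ω := by
  have hξ_sum : ∀ ω, ∑ j, ξ ω j = 1 := fun ω => by
    obtain ⟨i, hi⟩ := hξ ω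
    simp [hi]
  have hGξ : ∀ j ω, G j ω * ξ ω j = Y ω * ξ ω j := fun j ω => by
    obtain ⟨i, hi⟩ := hξ ω
    by_cases hij : j = i
    · subst hij; rw [hGY j ω hi]
    · simp [hi, hij]
  have hY_sum : (fun ω => ∑ j, G j ω * ξ ω j) = Y := by
    funext ω
    simp_rw [hGξ, ← Finset.mul_sum, hξ_sum, mul_one]
  have hGξ_int : ∀ j, Integrable (fun ω => G j ω * ξ ω j) μ := fun j => by
    simp_rw [hGξ j, mul_comm (Y _)]
    exact hY.bdd_mul (c := 1) (hξ_int.eval j).aestronglyMeasurable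
      (.of_forall fun ω => by obtain ⟨i, hi⟩ := hξ ω; by_cases j = i <;> simp_all)
  filter_upwards [sum_condExp_ae_eq_one hm hξ_int hξ_sum,
    sum_mul_condExp_ae_eq_condExp_sum hG hξ_int hGξ_int] with ω hc hGc
  rw [hY_sum] at hGc
  calc ∑ j, (G j ω - μ[Y|m] ω) * (ξ ω j - μ[ξ|m] ω j)
      = ∑ j, G j ω * ξ ω j - ∑ j, G j ω * μ[ξ|m] ω j
          - μ[Y|m] ω * ∑ j, ξ ω j + μ[Y|m] ω * ∑ j, μ[ξ|m] ω j := by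
        simp only [Finset.mul_sum, ← Finset.sum_sub_distrib, ← Finset.sum_add_distrib]
        exact Finset.sum_congr rfl fun j _ => by ring
    _ = Y ω - μ[Y|m] ω := by rw [congrFun hY_sum ω, hGc, hξ_sum, hc]; ring

end CondExp

section History

variable {Ω β : Type*} {m0 : MeasurableSpace Ω} [MeasurableSpace β] {𝓕 : Filtration ℕ m0}
  {X : ℕ → Ω → β}

lemma measurable_of_filtration_eq_comap
    (h𝓕 : ∀ t, (𝓕 t : MeasurableSpace Ω)
      = MeasurableSpace.comap (fun ω (s : Fin (t + 1)) => X (s : ℕ) ω) inferInstance) (t : ℕ) :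
    Measurable[𝓕 t] (X t) := by
  rw [h𝓕]
  exact (measurable_pi_apply (X := fun _ : Fin (t + 1) => β) (Fin.last t)).comp
    (comap_measurable _)

lemma exists_factor_of_filtration_eq_comap
    (h𝓕 : ∀ t, (𝓕 t : MeasurableSpace Ω)
      = MeasurableSpace.comap (fun ω (s : Fin (t + 1)) => X (s : ℕ) ω) inferInstance)
    {E : Type*} [MeasurableSpace E] [StandardBorelSpace E] [Nonempty E] {t : ℕ} {f : Ω → E}
    (hf : Measurable[𝓕 (t + 1)] f) :
    ∃ g : β → Ω → E, (∀ b, Measurable[𝓕 t] (g b)) ∧ ∀ ω, f ω = g (X (t + 1) ω) ω := by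
  have hsnoc : (fun ω (s : Fin (t + 1 + 1)) => X (s : ℕ) ω)
      = fun ω => Fin.snoc (fun s : Fin (t + 1) => X (s : ℕ) ω) (X (t + 1) ω) := by
    funext ω s
    induction s using Fin.lastCases <;> simp
  rw [h𝓕, hsnoc] at hf
  rw [h𝓕]
  exact exists_comap_factor_of_measurable_comap_snoc _ _ hf

end History

lemma exists_stronglyMeasurable_increment_eq
    {Ω : Type*} {m0 : MeasurableSpace Ω} {μ : Measure Ω} [IsFiniteMeasure μ]
    {N K : ℕ} {𝓕 : Filtration ℕ m0} {X : ℕ → Ω → (Fin N → ℝ)}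
    (hX : ∀ t ω, ∃ i, X t ω = Pi.single i 1)
    (h𝓕 : ∀ t, (𝓕 t : MeasurableSpace Ω)
      = MeasurableSpace.comap (fun ω (s : Fin (t + 1)) => X (s : ℕ) ω) inferInstance)
    {L : ℕ → Ω → Fin K → ℝ} (hL : Martingale L 𝓕 μ) (u : ℕ) :
    ∃ Zu : Ω → Fin K → Fin N → ℝ, StronglyMeasurable[𝓕 u] Zu ∧
      ∀ᵐ ω ∂μ, (fun i => ∑ j, Zu ω i j * (X (u + 1) - μ[X (u + 1)|𝓕 u]) ω j)
        = L (u + 1) ω - L u ω := by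
  obtain ⟨G, hG, hLG⟩ :=
    exists_factor_of_filtration_eq_comap h𝓕 (hL.stronglyAdapted (u + 1)).measurable
  have hX_int : Integrable (X (u + 1)) μ := integrable_of_forall_eq_single
    ((measurable_of_filtration_eq_comap h𝓕 (u + 1)).mono (𝓕.le _) le_rfl) (hX (u + 1))
  refine ⟨fun ω i j => G (Pi.single j 1) ω i - L u ω i, ?_, ?_⟩
  · have hL_u : Measurable[𝓕 u] (L u) := (hL.stronglyAdapted u).measurable
    exact Measurable.stronglyMeasurable (by fun_prop)
  · have hinc : ∀ i, ∀ᵐ ω ∂μ, ∑ j, (G (Pi.single j 1) ω i - L u ω i)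
        * (X (u + 1) ω j - μ[X (u + 1)|𝓕 u] ω j) = L (u + 1) ω i - L u ω i := fun i => by
      filter_upwards [sum_mul_sub_condExp_ae_eq (𝓕.le u) (hX (u + 1)) hX_int
        ((hL.integrable (u + 1)).eval i) (G := fun j ω => G (Pi.single j 1) ω i)
        (fun j => ((measurable_pi_apply i).comp (hG _)).stronglyMeasurable)
        (fun j ω hj => by rw [hLG ω, hj]),
        (condExp_pi_apply (hL.integrable (u + 1)) i).symm.trans
          ((hL.condExp_ae_eq u.le_succ).fun_comp (· i))] with ω h1 h2
      rwa [h2] at h1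
    filter_upwards [ae_all_iff.2 hinc] with ω hω
    funext i
    simpa only [Pi.sub_apply] using hω i

theorem martingale_representation_general
    {Ω : Type*} {m0 : MeasurableSpace Ω} {μ : Measure Ω} [IsProbabilityMeasure μ]
    {N K : ℕ} (𝓕 : Filtration ℕ m0)
    (X : ℕ → Ω → (Fin N → ℝ))
    (hXval : ∀ t ω, ∃ i : Fin N, X t ω = fun j => if j = i then (1 : ℝ) else 0)
    (h𝓕 : ∀ t, (𝓕 t : MeasurableSpace Ω)
      = MeasurableSpace.comap (fun ω (s : Fin (t + 1)) => X (s : ℕ) ω) inferInstance)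
    (M : ℕ → Ω → (Fin N → ℝ))
    (hM : ∀ t, M t = X t - μ[X t | 𝓕 (t - 1)])
    (L : ℕ → Ω → Fin K → ℝ)
    (hL : Martingale L 𝓕 μ) :
    ∃ Z : ℕ → Ω → Fin K → Fin N → ℝ,
      (∀ t, StronglyMeasurable[𝓕 t] (Z t)) ∧
      (∀ t, ∀ᵐ ω ∂μ,
        L (t + 1) ω = L 0 ω
          + ∑ u ∈ Finset.range (t + 1), (fun i => ∑ j, Z u ω i j * M (u + 1) ω j)) ∧
      ∀ Z' : ℕ → Ω → Fin K → Fin N → ℝ,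
        (∀ t, StronglyMeasurable[𝓕 t] (Z' t)) →
        (∀ t, ∀ᵐ ω ∂μ,
          L (t + 1) ω = L 0 ω
            + ∑ u ∈ Finset.range (t + 1), (fun i => ∑ j, Z' u ω i j * M (u + 1) ω j)) →
        ∀ u, ∀ᵐ ω ∂μ,
          (fun i => ∑ j, Z u ω i j * M (u + 1) ω j)
            = (fun i => ∑ j, Z' u ω i j * M (u + 1) ω j) := by
  have hX : ∀ t ω, ∃ i, X t ω = Pi.single i 1 := fun t ω => by
    obtain ⟨i, hi⟩ := hXval t ω
    exact ⟨i, hi.trans (funext fun j => (Pi.single_apply i 1 j).symm)⟩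
  have hM_succ : ∀ u, M (u + 1) = X (u + 1) - μ[X (u + 1)|𝓕 u] := fun u => hM (u + 1)
  choose Z hZ_meas hZ_inc using exists_stronglyMeasurable_increment_eq hX h𝓕 hL
  simp only [← hM_succ] at hZ_inc
  refine ⟨Z, hZ_meas, fun t => ?_, fun Z' _ hZ' u => ?_⟩
  · filter_upwards [ae_all_iff.2 hZ_inc] with ω hω
    exact (forall_succ_eq_add_sum_range_iff (L · ω) _).2 hω t
  · filter_upwards [ae_all_iff.2 hZ_inc, ae_all_iff.2 hZ'] with ω hω hω'
    rw [hω, (forall_succ_eq_add_sum_range_iff (L · ω) _).1 hω' u]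

/-- Martingale representation.  Any adapted `ℝ^K`-valued martingale `L`
can be written as `L (t+1) = L 0 + ∑_{0 ≤ u ≤ t} Z u • M (u+1)`, with `Z` adapted and
unique up to the equivalence `∼_M`. -/
theorem martingale_representation
    {Ω : Type*} {m0 : MeasurableSpace Ω} {μ : Measure Ω} [IsProbabilityMeasure μ]
    {N K : ℕ} (𝓕 : Filtration ℕ m0)
    (X : ℕ → Ω → (Fin N → ℝ))
    (hXval : ∀ t ω, ∃ i : Fin N, X t ω = fun j => if j = i then (1 : ℝ) else 0)
    (h𝓕 : ∀ t, (𝓕 t : MeasurableSpace Ω)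
      = MeasurableSpace.comap (fun ω (s : Fin (t + 1)) => X (s : ℕ) ω) inferInstance)
    (hXint : ∀ t, Integrable (X t) μ)
    (M : ℕ → Ω → (Fin N → ℝ))
    (hM : ∀ t, M t = X t - μ[X t | 𝓕 (t - 1)])
    (L : ℕ → Ω → Fin K → ℝ)
    (hL : Martingale L 𝓕 μ) :
    ∃ Z : ℕ → Ω → Fin K → Fin N → ℝ,
      (∀ t, StronglyMeasurable[𝓕 t] (Z t)) ∧
      (∀ t, ∀ᵐ ω ∂μ,
        L (t + 1) ω = L 0 ω
          + ∑ u ∈ Finset.range (t + 1), (fun i => ∑ j, Z u ω i j * M (u + 1) ω j)) ∧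
      ∀ Z' : ℕ → Ω → Fin K → Fin N → ℝ,
        (∀ t, StronglyMeasurable[𝓕 t] (Z' t)) →
        (∀ t, ∀ᵐ ω ∂μ,
          L (t + 1) ω = L 0 ω
            + ∑ u ∈ Finset.range (t + 1), (fun i => ∑ j, Z' u ω i j * M (u + 1) ω j)) →
        ∀ u, ∀ᵐ ω ∂μ,
          (fun i => ∑ j, Z u ω i j * M (u + 1) ω j)
            = (fun i => ∑ j, Z' u ω i j * M (u + 1) ω j) :=
  martingale_representation_general 𝓕 X hXval h𝓕 M hM L hL
end

section
/- For any R^K-valued F_t-measurable random variable W with E[W | F_{t-1}] = 0, there exists an F_{t-1}-measurable random matrix Z_{t-1} ∈ R^{K×N} such that W = Z_{t-1} M_t P-a.s., and Z_{t-1} is unique up to the equivalence Z^1 M_t = Z^2 M_t P-a.s. -/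
/-
A function of `(X₀, …, Xₜ)` is a function of `(X₀, …, Xₜ₋₁)` and of `Xₜ`, and since `Xₜ` only
takes the values `e₁, …, e_N` it is linear in `Xₜ`: `W = Z Xₜ` with `Z ω` the matrix whose
`j`-th column is the value of `W` at `Xₜ = eⱼ`, an `𝓕 (t - 1)`-measurable matrix. Pulling `Z`
out of the conditional expectation gives `Z E[Xₜ | 𝓕 (t - 1)] = E[W | 𝓕 (t - 1)] = 0`, hence
`W = Z Mₜ`. Uniqueness holds because `Z Mₜ` and `Z' Mₜ` both equal `W` almost surely.
-/

open MeasureTheory Matrix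

section BasisVectors

variable {ι κ : Type*} [Fintype ι] [DecidableEq ι]

theorem apply_single_eq_mulVec (f : (ι → ℝ) → κ → ℝ) (j : ι) :
    f (Pi.single j 1) = (Matrix.of fun i j => f (Pi.single j 1) i) *ᵥ Pi.single j 1 := by
  ext i
  simp

theorem mul_apply_eq_mulVec_mul_of_eq_single {x : ι → ℝ} {j₀ : ι} (hx : x = Pi.single j₀ 1)
    (A : Matrix κ ι ℝ) (i : κ) (j : ι) : A i j * x j = (A *ᵥ x) i * x j := by
  subst hx
  by_cases h : j = j₀ <;> simp [h]

end BasisVectors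

section ConditionalExpectation

variable {Ω ι κ : Type*} [Fintype ι] [Fintype κ] {m m0 : MeasurableSpace Ω} {μ : Measure Ω}

theorem condExp_apply_ae_eq {X : Ω → ι → ℝ} (hX : Integrable X μ) (j : ι) :
    (fun ω => μ[X|m] ω j) =ᵐ[μ] μ[fun ω => X ω j|m] :=
  (ContinuousLinearMap.proj (R := ℝ) (φ := fun _ : ι => ℝ) j).comp_condExp_comm hX

theorem condExp_mulVec_of_stronglyMeasurable_left {Z : Ω → Matrix κ ι ℝ}
    (hZ : StronglyMeasurable[m] Z) {X : Ω → ι → ℝ} (hX : Integrable X μ)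
    (hZX : ∀ i j, Integrable (fun ω => Z ω i j * X ω j) μ) :
    μ[fun ω => Z ω *ᵥ X ω|m] =ᵐ[μ] fun ω => Z ω *ᵥ μ[X|m] ω := by
  have hZX_int : Integrable (fun ω => Z ω *ᵥ X ω) μ :=
    Integrable.of_eval fun i => integrable_finsetSum _ fun j _ => hZX i j
  suffices ∀ i, (fun ω => μ[fun ω => Z ω *ᵥ X ω|m] ω i) =ᵐ[μ] fun ω => (Z ω *ᵥ μ[X|m] ω) i by
    filter_upwards [ae_all_iff.2 this] with ω hω using funext hω
  intro i
  have hZij (j : ι) : StronglyMeasurable[m] fun ω => Z ω i j :=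
    (continuous_apply_apply i j).comp_stronglyMeasurable hZ
  have hpull (j : ι) : μ[fun ω => Z ω i j * X ω j|m] =ᵐ[μ] fun ω => Z ω i j * μ[X|m] ω j :=
    (condExp_mul_of_stronglyMeasurable_left (hZij j) (hZX i j) (hX.eval j)).trans <| by
      filter_upwards [condExp_apply_ae_eq (m := m) hX j] with ω hω
      simp [hω]
  calc (fun ω => μ[fun ω => Z ω *ᵥ X ω|m] ω i)
      =ᵐ[μ] μ[∑ j, fun ω => Z ω i j * X ω j|m] := by
        convert condExp_apply_ae_eq hZX_int i using 3
        simp [mulVec, dotProduct]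
    _ =ᵐ[μ] ∑ j, μ[fun ω => Z ω i j * X ω j|m] := condExp_finsetSum (fun j _ => hZX i j) m
    _ =ᵐ[μ] fun ω => (Z ω *ᵥ μ[X|m] ω) i := by
        filter_upwards [ae_all_iff.2 fun j => hpull j] with ω hω
        simp [mulVec, dotProduct, hω]

theorem ae_eq_mulVec_sub_condExp {W : Ω → κ → ℝ} {Z : Ω → Matrix κ ι ℝ}
    (hZ : StronglyMeasurable[m] Z) {X : Ω → ι → ℝ} (hX : Integrable X μ)
    (hZX : ∀ i j, Integrable (fun ω => Z ω i j * X ω j) μ) (hWZX : ∀ ω, W ω = Z ω *ᵥ X ω)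
    (hW : μ[W|m] =ᵐ[μ] 0) :
    W =ᵐ[μ] fun ω => Z ω *ᵥ (X ω - μ[X|m] ω) := by
  obtain rfl : W = fun ω => Z ω *ᵥ X ω := funext hWZX
  filter_upwards [(condExp_mulVec_of_stronglyMeasurable_left hZ hX hZX).symm.trans hW] with ω hω
  rw [mulVec_sub, hω, Pi.zero_apply, sub_zero]

theorem ae_eq_mulVec_sub_condExp_of_eq_single [DecidableEq ι] {W : Ω → κ → ℝ}
    (hW_int : Integrable W μ) {Z : Ω → Matrix κ ι ℝ} (hZ : StronglyMeasurable[m] Z)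
    {X : Ω → ι → ℝ} (hX : Integrable X μ) (hX_single : ∀ ω, ∃ j, X ω = Pi.single j 1)
    (hWZX : ∀ ω, W ω = Z ω *ᵥ X ω) (hW : μ[W|m] =ᵐ[μ] 0) :
    W =ᵐ[μ] fun ω => Z ω *ᵥ (X ω - μ[X|m] ω) := by
  refine ae_eq_mulVec_sub_condExp hZ hX (fun i j => ?_) hWZX hW
  have hXj_le (ω : Ω) : ‖X ω j‖ ≤ 1 := by
    obtain ⟨j₀, hj₀⟩ := hX_single ω
    by_cases h : j = j₀ <;> simp [hj₀, h]
  refine ((hW_int.eval i).mul_bdd (hX.eval j).aestronglyMeasurable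
    (ae_of_all _ hXj_le)).congr (ae_of_all _ fun ω => ?_)
  obtain ⟨j₀, hj₀⟩ := hX_single ω
  simp only [hWZX, mul_apply_eq_mulVec_mul_of_eq_single hj₀]

end ConditionalExpectation

section Factorization

variable {Ω α ι κ : Type*} [Fintype ι] [DecidableEq ι] [Fintype κ] [MeasurableSpace α]

theorem exists_stronglyMeasurable_mulVec_eq_of_comap_prod {φ : Ω → α} {ξ : Ω → ι → ℝ}
    (hξ : ∀ ω, ∃ j, ξ ω = Pi.single j 1) {W : Ω → κ → ℝ}
    (hW : Measurable[MeasurableSpace.comap (fun ω => (φ ω, ξ ω)) inferInstance] W) :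
    ∃ Z : Ω → κ → ι → ℝ, StronglyMeasurable[MeasurableSpace.comap φ inferInstance] Z ∧
      ∀ ω, W ω = Z ω *ᵥ ξ ω := by
  obtain ⟨g, hg, rfl⟩ := hW.exists_eq_measurable_comp
  let G : α → κ → ι → ℝ := fun a => Matrix.of fun i j => g (a, Pi.single j 1) i
  have hG : Measurable G := measurable_pi_lambda _ fun i => measurable_pi_lambda _ fun j =>
    (measurable_pi_apply i).comp (hg.comp measurable_prodMk_right)
  refine ⟨G ∘ φ, (hG.comp (comap_measurable φ)).stronglyMeasurable, fun ω => ?_⟩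
  obtain ⟨j, hj⟩ := hξ ω
  rw [Function.comp_apply, Function.comp_apply, hj]
  exact apply_single_eq_mulVec (fun x => g (φ ω, x)) j

end Factorization

section Paths

variable {Ω E : Type*} [MeasurableSpace E]

theorem measurable_finSnoc {n : ℕ} :
    Measurable fun p : (Fin n → E) × E => (Fin.snoc p.1 p.2 : Fin (n + 1) → E) :=
  measurable_pi_iff.2 fun r => Fin.lastCases (by simpa using measurable_snd)
    (fun r => by simpa using measurable_fst.eval) r

theorem comap_path_succ_le (X : ℕ → Ω → E) (s : ℕ) :
    MeasurableSpace.comap (fun ω (r : Fin (s + 1 + 1)) => X r ω) inferInstance ≤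
      MeasurableSpace.comap (fun ω => (fun r : Fin (s + 1) => X r ω, X (s + 1) ω))
        inferInstance := by
  have h : (fun ω (r : Fin (s + 1 + 1)) => X r ω) =
      (fun p : (Fin (s + 1) → E) × E => (Fin.snoc p.1 p.2 : Fin (s + 1 + 1) → E)) ∘
        fun ω => (fun r : Fin (s + 1) => X r ω, X (s + 1) ω) := by
    funext ω r
    refine Fin.lastCases ?_ (fun r => ?_) r <;> simp
  rw [h, ← MeasurableSpace.comap_comp]
  exact MeasurableSpace.comap_mono measurable_finSnoc.comap_le

end Paths

theorem mean_zero_representation_general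
    {Ω : Type*} {m0 : MeasurableSpace Ω} {μ : Measure Ω}
    {N K : ℕ} (𝓕 : Filtration ℕ m0)
    (X : ℕ → Ω → (Fin N → ℝ))
    (hXval : ∀ t ω, ∃ i : Fin N, X t ω = fun j => if j = i then (1 : ℝ) else 0)
    (h𝓕 : ∀ t, (𝓕 t : MeasurableSpace Ω)
      = MeasurableSpace.comap (fun ω (s : Fin (t + 1)) => X (s : ℕ) ω) inferInstance)
    (hXint : ∀ t, Integrable (X t) μ)
    (M : ℕ → Ω → (Fin N → ℝ))
    (hM : ∀ t, M t = X t - μ[X t | 𝓕 (t - 1)])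
    (t : ℕ) (ht : 1 ≤ t)
    (W : Ω → Fin K → ℝ)
    (hWmeas : StronglyMeasurable[𝓕 t] W)
    (hWint : Integrable W μ)
    (hW : μ[W | 𝓕 (t - 1)] =ᵐ[μ] 0) :
    ∃ Z : Ω → Fin K → Fin N → ℝ,
      StronglyMeasurable[𝓕 (t - 1)] Z ∧
      (W =ᵐ[μ] fun ω i => ∑ j, Z ω i j * M t ω j) ∧
      ∀ Z' : Ω → Fin K → Fin N → ℝ,
        StronglyMeasurable[𝓕 (t - 1)] Z' →
        (W =ᵐ[μ] fun ω i => ∑ j, Z' ω i j * M t ω j) →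
        (fun ω i => ∑ j, Z ω i j * M t ω j) =ᵐ[μ] (fun ω i => ∑ j, Z' ω i j * M t ω j) := by
  obtain ⟨s, rfl⟩ : ∃ s, t = s + 1 := ⟨t - 1, by omega⟩
  have hX_single (ω : Ω) : ∃ j, X (s + 1) ω = Pi.single j 1 := by
    obtain ⟨j, hj⟩ := hXval (s + 1) ω
    exact ⟨j, hj.trans (funext fun i => (Pi.single_apply j 1 i).symm)⟩
  obtain ⟨Z, hZ, hWZ⟩ := exists_stronglyMeasurable_mulVec_eq_of_comap_prod hX_single
    (hWmeas.measurable.mono ((h𝓕 _).trans_le (comap_path_succ_le X s)) le_rfl)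
  rw [← h𝓕 s] at hZ
  have hrep : W =ᵐ[μ] fun ω => Z ω *ᵥ M (s + 1) ω := by
    rw [hM]
    exact ae_eq_mulVec_sub_condExp_of_eq_single hWint hZ (hXint _) hX_single hWZ hW
  exact ⟨Z, hZ, hrep, fun Z' _ hZ' => hrep.symm.trans hZ'⟩

/-- any `ℝ^K`-valued `𝓕 t`-measurable `W` with `E[W | 𝓕 (t-1)] = 0` can be
written `W = Z_{t-1} M t` a.s. for some `𝓕 (t-1)`-measurable matrix `Z_{t-1}`, unique up to
the equivalence `Z¹ M t = Z² M t` a.s. -/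
theorem mean_zero_representation
    {Ω : Type*} {m0 : MeasurableSpace Ω} {μ : Measure Ω} [IsProbabilityMeasure μ]
    {N K : ℕ} (𝓕 : Filtration ℕ m0)
    (X : ℕ → Ω → (Fin N → ℝ))
    (hXval : ∀ t ω, ∃ i : Fin N, X t ω = fun j => if j = i then (1 : ℝ) else 0)
    (h𝓕 : ∀ t, (𝓕 t : MeasurableSpace Ω)
      = MeasurableSpace.comap (fun ω (s : Fin (t + 1)) => X (s : ℕ) ω) inferInstance)
    (hXint : ∀ t, Integrable (X t) μ)
    (M : ℕ → Ω → (Fin N → ℝ))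
    (hM : ∀ t, M t = X t - μ[X t | 𝓕 (t - 1)])
    (t : ℕ) (ht : 1 ≤ t)
    (W : Ω → Fin K → ℝ)
    (hWmeas : StronglyMeasurable[𝓕 t] W)
    (hWint : Integrable W μ)
    (hW : μ[W | 𝓕 (t - 1)] =ᵐ[μ] 0) :
    ∃ Z : Ω → Fin K → Fin N → ℝ,
      StronglyMeasurable[𝓕 (t - 1)] Z ∧
      (W =ᵐ[μ] fun ω i => ∑ j, Z ω i j * M t ω j) ∧
      ∀ Z' : Ω → Fin K → Fin N → ℝ,
        StronglyMeasurable[𝓕 (t - 1)] Z' →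
        (W =ᵐ[μ] fun ω i => ∑ j, Z' ω i j * M t ω j) →
        (fun ω i => ∑ j, Z ω i j * M t ω j) =ᵐ[μ] (fun ω i => ∑ j, Z' ω i j * M t ω j) :=
  mean_zero_representation_general 𝓕 X hXval h𝓕 hXint M hM t ht W hWmeas hWint hW
end

section
/- If for some t and Z the map y ↦ y - F(ω,t,y,Z_t) fails to be surjective onto R^K with positive probability, then there exists a terminal condition Q for which the discrete BSDE admits no adapted solution on {t,...,T}. -/
/-!
Because the filtration is generated by a finite-state process, every `𝓕 s`-measurable variable
takes finitely many values and is therefore bounded. Hence an `𝓕 s`-measurable variable of the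
form `D M_{s+1}`, with `D` also `𝓕 s`-measurable, vanishes: its conditional expectation given
`𝓕 s` is both itself and `D E[M_{s+1} | 𝓕 s] = 0`.

Let `Q` be the value at `T` of the process started from `q + Z M_{t+1}` at time `t + 1` and then
driven by `Y_{s+1} = Y_s - F(s, Y_s, 0)`. Going backwards from `T`, this orthogonality and the
injectivity of `y ↦ y - F(s, y, 0)` force every adapted solution to coincide with that process
after time `t`; at time `t` the same orthogonality forces `Y_t - F(t, Y_t, Z) = q` almost surely,
which is impossible with positive probability.
-/

open MeasureTheory Set Matrix

theorem Function.FactorsThrough.finite_range {α β γ : Type*} {f : α → γ} {g : α → β}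
    (hfg : f.FactorsThrough g) (hg : (range g).Finite) : (range f).Finite := by
  rcases isEmpty_or_nonempty α with hα | ⟨⟨a⟩⟩
  · simp [range_eq_empty]
  · refine (hg.image (Function.extend g f fun _ => f a)).subset ?_
    rintro _ ⟨x, rfl⟩
    exact ⟨g x, mem_range_self x, hfg.extend_apply _ x⟩

section

variable {Ω : Type*} {m m0 : MeasurableSpace Ω} {μ : Measure Ω}

theorem exists_norm_le_of_stronglyMeasurable_comap {β E : Type*} [mβ : MeasurableSpace β]
    [NormedAddCommGroup E] {g : Ω → β} (hg : (range g).Finite) {f : Ω → E}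
    (hf : StronglyMeasurable[mβ.comap g] f) : ∃ C, ∀ ω, ‖f ω‖ ≤ C := by
  obtain ⟨C, hC⟩ := (hf.factorsThrough.finite_range hg).isBounded.exists_norm_le
  exact ⟨C, fun ω => hC _ (mem_range_self ω)⟩

theorem finite_range_history {α ι : Type*} [Finite ι] {e : ι → α} {X : ℕ → Ω → α}
    (hX : ∀ t ω, ∃ i, X t ω = e i) (n : ℕ) : (range fun ω (s : Fin n) => X s ω).Finite :=
  (Set.Finite.pi (t := fun _ => range e) fun _ => finite_range e).subset <| by
    rintro _ ⟨ω, rfl⟩ s -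
    obtain ⟨i, hi⟩ := hX s ω
    exact ⟨i, hi.symm⟩

theorem measurable_comap_history {α : Type*} [MeasurableSpace α] {X : ℕ → Ω → α} {n s : ℕ}
    (hs : s < n) :
    Measurable[MeasurableSpace.comap (fun ω (u : Fin n) => X u ω) inferInstance] (X s) :=
  (measurable_pi_apply (⟨s, hs⟩ : Fin n)).comp (comap_measurable fun ω (u : Fin n) => X u ω)

theorem condExp_sub_condExp_ae_eq_zero {E : Type*} [NormedAddCommGroup E] [NormedSpace ℝ E]
    [CompleteSpace E] (hm : m ≤ m0) [SigmaFinite (μ.trim hm)] {X : Ω → E} (hX : Integrable X μ) :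
    μ[X - μ[X | m] | m] =ᵐ[μ] 0 := by
  refine (condExp_sub hX integrable_condExp m).trans ?_
  rw [condExp_of_stronglyMeasurable hm stronglyMeasurable_condExp integrable_condExp, sub_self]

theorem ae_sub_add_eq_of_telescoped {A : Type*} [AddCommGroup A] {Y f g : ℕ → Ω → A}
    {Q : Ω → A} {t T : ℕ}
    (h : ∀ s, t ≤ s → s ≤ T → ∀ᵐ ω ∂μ,
      Y s ω - ∑ u ∈ Finset.Ico s T, f u ω + ∑ u ∈ Finset.Ico s T, g u ω = Q ω)
    {s : ℕ} (hts : t ≤ s) (hsT : s < T) : ∀ᵐ ω ∂μ, Y s ω - f s ω + g s ω = Y (s + 1) ω := by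
  filter_upwards [h s hts hsT.le, h (s + 1) (by omega) hsT] with ω h₀ h₁
  rw [Finset.sum_eq_sum_Ico_succ_bot hsT, Finset.sum_eq_sum_Ico_succ_bot hsT, ← h₁] at h₀
  linear_combination (norm := abel) h₀

theorem ae_eq_zero_of_ae_eq_sum_mul {κ : Type*} [Fintype κ] (hm : m ≤ m0) [SigmaFinite (μ.trim hm)]
    {a W : κ → Ω → ℝ} (ha : ∀ j, StronglyMeasurable[m] (a j))
    (ha_bdd : ∀ j, ∃ C, ∀ ω, ‖a j ω‖ ≤ C) (hW : ∀ j, Integrable (W j) μ)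
    (hW0 : ∀ j, μ[W j | m] =ᵐ[μ] 0) {h : Ω → ℝ} (hh : StronglyMeasurable[m] h)
    (hh_int : Integrable h μ) (hae : h =ᵐ[μ] ∑ j, a j * W j) : h =ᵐ[μ] 0 := by
  have haW : ∀ j, Integrable (a j * W j) μ := fun j =>
    let ⟨C, hC⟩ := ha_bdd j
    (hW j).bdd_mul ((ha j).mono hm).aestronglyMeasurable (.of_forall hC)
  have hzero : ∀ j, μ[a j * W j | m] =ᵐ[μ] 0 := fun j =>
    (condExp_mul_of_stronglyMeasurable_left (ha j) (haW j) (hW j)).trans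
      ((hW0 j).mono fun ω hω => by simp [hω])
  calc h = μ[h | m] := (condExp_of_stronglyMeasurable hm hh hh_int).symm
    _ =ᵐ[μ] μ[∑ j, a j * W j | m] := condExp_congr_ae hae
    _ =ᵐ[μ] ∑ j, μ[a j * W j | m] := condExp_finsetSum (fun j _ => haW j) m
    _ =ᵐ[μ] 0 := by
      filter_upwards [ae_all_iff.2 hzero] with ω hω
      simp [Finset.sum_apply, hω]

theorem ae_eq_zero_of_ae_mulVec_eq {ι κ : Type*} [Fintype ι] [Fintype κ] (hm : m ≤ m0)
    [SigmaFinite (μ.trim hm)]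
    {D : Ω → ι → κ → ℝ} (hD : StronglyMeasurable[m] D) (hD_bdd : ∃ C, ∀ ω, ‖D ω‖ ≤ C)
    {W : Ω → κ → ℝ} (hW : Integrable W μ) (hW0 : μ[W | m] =ᵐ[μ] 0)
    {H : Ω → ι → ℝ} (hH : StronglyMeasurable[m] H) (hH_int : Integrable H μ)
    (hDH : ∀ᵐ ω ∂μ, D ω *ᵥ W ω = H ω) : H =ᵐ[μ] 0 := by
  obtain ⟨C, hC⟩ := hD_bdd
  have hW0' : ∀ j, μ[fun ω => W ω j | m] =ᵐ[μ] 0 := fun j =>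
    ((ContinuousLinearMap.proj (R := ℝ) (φ := fun _ : κ => ℝ) j).comp_condExp_comm hW).symm.trans
      (hW0.mono fun ω hω => by simp [hω])
  have hcoord : ∀ i, (fun ω => H ω i) =ᵐ[μ] 0 := fun i =>
    ae_eq_zero_of_ae_eq_sum_mul hm (a := fun j ω => D ω i j) (W := fun j ω => W ω j)
      (fun j => (continuous_apply j).comp_stronglyMeasurable
        ((continuous_apply i).comp_stronglyMeasurable hD))
      (fun j => ⟨C, fun ω => (norm_le_pi_norm (D ω i) j).trans
        ((norm_le_pi_norm (D ω) i).trans (hC ω))⟩)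
      hW.eval hW0' ((continuous_apply i).comp_stronglyMeasurable hH) (hH_int.eval i)
      (hDH.mono fun ω hω => by simp [← hω, mulVec, dotProduct, Finset.sum_apply])
  filter_upwards [ae_all_iff.2 hcoord] with ω hω
  exact funext hω

theorem ae_sub_eq_of_ae_step {ι κ : Type*} [Fintype ι] [Fintype κ] [IsFiniteMeasure μ]
    (hm : m ≤ m0) {β : Type*} [mβ : MeasurableSpace β]
    {g : Ω → β} (hg : (range g).Finite) (hmg : m = mβ.comap g)
    {W : Ω → κ → ℝ} (hW : Integrable W μ) (hW0 : μ[W | m] =ᵐ[μ] 0)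
    {f : Ω → (ι → ℝ) → (ι → κ → ℝ) → ι → ℝ}
    (hf : ∀ (Y : Ω → ι → ℝ) (Z : Ω → ι → κ → ℝ), StronglyMeasurable[m] Y →
      StronglyMeasurable[m] Z → StronglyMeasurable[m] fun ω => f ω (Y ω) (Z ω))
    (hf_inv : ∀ (Y : Ω → ι → ℝ) (Z₁ Z₂ : Ω → ι → κ → ℝ),
      (∀ᵐ ω ∂μ, Z₁ ω *ᵥ W ω = Z₂ ω *ᵥ W ω) → ∀ᵐ ω ∂μ, f ω (Y ω) (Z₁ ω) = f ω (Y ω) (Z₂ ω))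
    {Y G : Ω → ι → ℝ} {Z₁ Z₂ : Ω → ι → κ → ℝ} (hY : StronglyMeasurable[m] Y)
    (hG : StronglyMeasurable[m] G) (hZ₁ : StronglyMeasurable[m] Z₁)
    (hZ₂ : StronglyMeasurable[m] Z₂)
    (hstep : ∀ᵐ ω ∂μ, Y ω - f ω (Y ω) (Z₁ ω) + Z₁ ω *ᵥ W ω = G ω + Z₂ ω *ᵥ W ω) :
    ∀ᵐ ω ∂μ, Y ω - f ω (Y ω) (Z₂ ω) = G ω := by
  subst hmg
  set H := fun ω => G ω - (Y ω - f ω (Y ω) (Z₁ ω))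
  have hH : StronglyMeasurable[mβ.comap g] H := hG.sub (hY.sub (hf Y Z₁ hY hZ₁))
  obtain ⟨C, hC⟩ := exists_norm_le_of_stronglyMeasurable_comap hg hH
  have hH0 : H =ᵐ[μ] 0 := by
    refine ae_eq_zero_of_ae_mulVec_eq hm (hZ₁.sub hZ₂)
      (exists_norm_le_of_stronglyMeasurable_comap hg (hZ₁.sub hZ₂)) hW hW0 hH
      (.of_bound (hH.mono hm).aestronglyMeasurable C (.of_forall hC)) ?_
    filter_upwards [hstep] with ω h
    refine (sub_mulVec (Z₁ ω) (Z₂ ω) (W ω)).trans ?_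
    show _ = G ω - _
    rw [eq_sub_iff_add_eq', ← add_sub_assoc, h, add_sub_cancel_right]
  have hZW : ∀ᵐ ω ∂μ, Z₁ ω *ᵥ W ω = Z₂ ω *ᵥ W ω := by
    filter_upwards [hstep, hH0] with ω h h0
    rw [Pi.zero_apply, sub_eq_zero] at h0
    rw [h0] at h
    exact add_left_cancel h
  filter_upwards [hH0, hf_inv Y Z₁ Z₂ hZW] with ω h0 hf
  rw [Pi.zero_apply, sub_eq_zero] at h0
  rw [← hf, h0]

variable {N K : ℕ}

/-- `forwardFlow F t₀ Y₀ n` is the value at time `t₀ + n` of `Y (s + 1) = Y s - F(s, Y s, 0)`. -/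
def forwardFlow (F : Ω → ℕ → (Fin K → ℝ) → (Fin K → Fin N → ℝ) → Fin K → ℝ) (t₀ : ℕ)
    (Y₀ : Ω → Fin K → ℝ) : ℕ → Ω → Fin K → ℝ
  | 0 => Y₀
  | n + 1 => fun ω => forwardFlow F t₀ Y₀ n ω - F ω (t₀ + n) (forwardFlow F t₀ Y₀ n ω) 0

theorem stronglyMeasurable_forwardFlow {𝓕 : Filtration ℕ m0}
    {F : Ω → ℕ → (Fin K → ℝ) → (Fin K → Fin N → ℝ) → Fin K → ℝ} {T t₀ : ℕ}
    (hF : ∀ s < T, ∀ (Y : Ω → Fin K → ℝ) (Z : Ω → Fin K → Fin N → ℝ),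
      StronglyMeasurable[𝓕 s] Y → StronglyMeasurable[𝓕 s] Z →
      StronglyMeasurable[𝓕 s] fun ω => F ω s (Y ω) (Z ω))
    {Y₀ : Ω → Fin K → ℝ} (hY₀ : StronglyMeasurable[𝓕 t₀] Y₀) {n : ℕ} (hn : t₀ + n ≤ T) :
    StronglyMeasurable[𝓕 (t₀ + n)] (forwardFlow F t₀ Y₀ n) := by
  induction n with
  | zero => exact hY₀
  | succ n ih =>
    have h := ih (by omega)
    exact (h.sub (hF _ (by omega) _ _ h stronglyMeasurable_const)).mono (𝓕.mono (by omega))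

structure FiniteStateBSDE (μ : Measure Ω) (𝓕 : Filtration ℕ m0) (X M : ℕ → Ω → Fin N → ℝ)
    (F : Ω → ℕ → (Fin K → ℝ) → (Fin K → Fin N → ℝ) → Fin K → ℝ) (T : ℕ) : Prop where
  unitVector : ∀ t ω, ∃ i : Fin N, X t ω = fun j => if j = i then (1 : ℝ) else 0
  natural : ∀ t, 𝓕 t = MeasurableSpace.comap (fun ω (s : Fin (t + 1)) => X s ω) inferInstance
  integrable : ∀ t, Integrable (X t) μ
  increment : ∀ t, M t = X t - μ[X t | 𝓕 (t - 1)]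
  stronglyMeasurable_driver : ∀ s < T, ∀ (Y : Ω → Fin K → ℝ) (Z : Ω → Fin K → Fin N → ℝ),
    StronglyMeasurable[𝓕 s] Y → StronglyMeasurable[𝓕 s] Z →
    StronglyMeasurable[𝓕 s] fun ω => F ω s (Y ω) (Z ω)
  driver_congr : ∀ s < T, ∀ (Y : Ω → Fin K → ℝ) (Z₁ Z₂ : Ω → Fin K → Fin N → ℝ),
    (∀ᵐ ω ∂μ, Z₁ ω *ᵥ M (s + 1) ω = Z₂ ω *ᵥ M (s + 1) ω) →
    ∀ᵐ ω ∂μ, F ω s (Y ω) (Z₁ ω) = F ω s (Y ω) (Z₂ ω)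

namespace FiniteStateBSDE

variable {𝓕 : Filtration ℕ m0} {X M : ℕ → Ω → Fin N → ℝ}
  {F : Ω → ℕ → (Fin K → ℝ) → (Fin K → Fin N → ℝ) → Fin K → ℝ} {T : ℕ}

theorem exists_norm_le (h : FiniteStateBSDE μ 𝓕 X M F T) {E : Type*} [NormedAddCommGroup E]
    {s : ℕ} {f : Ω → E} (hf : StronglyMeasurable[𝓕 s] f) : ∃ C, ∀ ω, ‖f ω‖ ≤ C :=
  exists_norm_le_of_stronglyMeasurable_comap (finite_range_history h.unitVector _)
    (h.natural s ▸ hf)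

theorem stronglyMeasurable_increment (h : FiniteStateBSDE μ 𝓕 X M F T) (s : ℕ) :
    StronglyMeasurable[𝓕 (s + 1)] (M (s + 1)) :=
  h.increment (s + 1) ▸ (h.natural (s + 1) ▸ measurable_comap_history (s + 1).lt_succ_self
    ).stronglyMeasurable.sub (stronglyMeasurable_condExp.mono (𝓕.mono s.le_succ))

theorem ae_sub_eq_of_step (h : FiniteStateBSDE μ 𝓕 X M F T) [IsFiniteMeasure μ] {s : ℕ}
    (hs : s < T) {Y G : Ω → Fin K → ℝ} {Z₁ Z₂ : Ω → Fin K → Fin N → ℝ}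
    (hY : StronglyMeasurable[𝓕 s] Y) (hG : StronglyMeasurable[𝓕 s] G)
    (hZ₁ : StronglyMeasurable[𝓕 s] Z₁) (hZ₂ : StronglyMeasurable[𝓕 s] Z₂)
    (hstep : ∀ᵐ ω ∂μ,
      Y ω - F ω s (Y ω) (Z₁ ω) + Z₁ ω *ᵥ M (s + 1) ω = G ω + Z₂ ω *ᵥ M (s + 1) ω) :
    ∀ᵐ ω ∂μ, Y ω - F ω s (Y ω) (Z₂ ω) = G ω :=
  ae_sub_eq_of_ae_step (𝓕.le s) (finite_range_history h.unitVector _) (h.natural s)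
    (h.increment (s + 1) ▸ (h.integrable _).sub integrable_condExp)
    (h.increment (s + 1) ▸ condExp_sub_condExp_ae_eq_zero (𝓕.le s) (h.integrable _))
    (f := fun ω => F ω s) (h.stronglyMeasurable_driver s hs) (h.driver_congr s hs)
    hY hG hZ₁ hZ₂ hstep

theorem ae_eq_forwardFlow (h : FiniteStateBSDE μ 𝓕 X M F T) [IsFiniteMeasure μ] {t₀ : ℕ}
    (ht₀ : t₀ ≤ T)
    (hinj : ∀ s, t₀ ≤ s → s < T → ∀ᵐ ω ∂μ, Function.Injective fun y => y - F ω s y 0)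
    {Y₀ : Ω → Fin K → ℝ} (hY₀ : StronglyMeasurable[𝓕 t₀] Y₀) {Y : ℕ → Ω → Fin K → ℝ}
    {Z : ℕ → Ω → Fin K → Fin N → ℝ} (hY : ∀ s, StronglyMeasurable[𝓕 s] (Y s))
    (hZ : ∀ s, StronglyMeasurable[𝓕 s] (Z s))
    (hstep : ∀ s, t₀ ≤ s → s < T →
      ∀ᵐ ω ∂μ, Y s ω - F ω s (Y s ω) (Z s ω) + Z s ω *ᵥ M (s + 1) ω = Y (s + 1) ω)
    (hT : Y T =ᵐ[μ] forwardFlow F t₀ Y₀ (T - t₀)) {n : ℕ} (hn : n ≤ T - t₀) :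
    Y (t₀ + n) =ᵐ[μ] forwardFlow F t₀ Y₀ n := by
  induction hn using Nat.decreasingInduction with
  | self => rwa [Nat.add_sub_cancel' ht₀]
  | of_succ n hn ih =>
    have hs : t₀ + n < T := by omega
    have hŶ := stronglyMeasurable_forwardFlow h.stronglyMeasurable_driver hY₀ hs.le
    refine (hinj _ (by omega) hs).mp <| (h.ae_sub_eq_of_step hs (Z₂ := 0)
      (G := fun ω => forwardFlow F t₀ Y₀ n ω - F ω (t₀ + n) (forwardFlow F t₀ Y₀ n ω) 0) (hY _)
      (hŶ.sub (h.stronglyMeasurable_driver _ hs _ _ hŶ stronglyMeasurable_const)) (hZ _)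
      stronglyMeasurable_const ?_).mono fun ω hω hinjω => hinjω hω
    filter_upwards [hstep _ (by omega) hs, ih] with ω h₁ h₂
    refine h₁.trans (h₂.trans ?_)
    simp only [forwardFlow, Pi.zero_apply, left_eq_add]
    exact zero_mulVec _

end FiniteStateBSDE

end

theorem necessity_of_surjectivity_general
    {Ω : Type*} {m0 : MeasurableSpace Ω} {μ : Measure Ω} [IsProbabilityMeasure μ]
    {N K T : ℕ} (𝓕 : Filtration ℕ m0)
    (X : ℕ → Ω → (Fin N → ℝ))
    (hXval : ∀ t ω, ∃ i : Fin N, X t ω = fun j => if j = i then (1 : ℝ) else 0)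
    (h𝓕 : ∀ t, (𝓕 t : MeasurableSpace Ω)
      = MeasurableSpace.comap (fun ω (s : Fin (t + 1)) => X (s : ℕ) ω) inferInstance)
    (hXint : ∀ t, Integrable (X t) μ)
    (M : ℕ → Ω → (Fin N → ℝ))
    (hM : ∀ t, M t = X t - μ[X t | 𝓕 (t - 1)])
    (F : Ω → ℕ → (Fin K → ℝ) → (Fin K → Fin N → ℝ) → (Fin K → ℝ))
    (hFmeas : ∀ s < T, ∀ (Y : Ω → Fin K → ℝ) (Z : Ω → Fin K → Fin N → ℝ),
      StronglyMeasurable[𝓕 s] Y → StronglyMeasurable[𝓕 s] Z →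
      StronglyMeasurable[𝓕 s] (fun ω => F ω s (Y ω) (Z ω)))
    (hFinv : ∀ s < T, ∀ (Y : Ω → Fin K → ℝ) (Z1 Z2 : Ω → Fin K → Fin N → ℝ),
      (∀ᵐ ω ∂μ, (fun i => ∑ j, Z1 ω i j * M (s + 1) ω j)
          = (fun i => ∑ j, Z2 ω i j * M (s + 1) ω j)) →
      ∀ᵐ ω ∂μ, F ω s (Y ω) (Z1 ω) = F ω s (Y ω) (Z2 ω))
    (t : ℕ) (ht : t < T)
    -- bijectivity may be assumed at all other times
    (hFbij : ∀ s < T, s ≠ t → ∀ Z : Ω → Fin K → Fin N → ℝ,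
      ∀ᵐ ω ∂μ, Function.Bijective (fun y : Fin K → ℝ => y - F ω s y (Z ω)))
    -- failure of surjectivity at time t with positive probability
    (Z : Ω → Fin K → Fin N → ℝ) (hZmeas : StronglyMeasurable[𝓕 t] Z)
    (q : Fin K → ℝ)
    (hnosurj : 0 < μ {ω | ∀ y : Fin K → ℝ, y - F ω t y (Z ω) ≠ q}) :
    ∃ Q : Ω → Fin K → ℝ,
      StronglyMeasurable[𝓕 T] Q ∧ (∃ C, ∀ ω, ‖Q ω‖ ≤ C) ∧
      ¬ ∃ (Y : ℕ → Ω → Fin K → ℝ) (Z' : ℕ → Ω → Fin K → Fin N → ℝ),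
          (∀ s, StronglyMeasurable[𝓕 s] (Y s)) ∧
          (∀ s, StronglyMeasurable[𝓕 s] (Z' s)) ∧
          (∀ s, t ≤ s → s ≤ T → ∀ᵐ ω ∂μ,
            Y s ω - ∑ u ∈ Finset.Ico s T, F ω u (Y u ω) (Z' u ω)
              + ∑ u ∈ Finset.Ico s T, (fun i => ∑ j, Z' u ω i j * M (u + 1) ω j) = Q ω) := by
  have hB : FiniteStateBSDE μ 𝓕 X M F T := ⟨hXval, h𝓕, hXint, hM, hFmeas, hFinv⟩
  have hY₀ : StronglyMeasurable[𝓕 (t + 1)] fun ω => q + Z ω *ᵥ M (t + 1) ω :=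
    stronglyMeasurable_const.add <|
      (continuous_fst.matrix_mulVec continuous_snd).comp_stronglyMeasurable
        ((hZmeas.mono (𝓕.mono t.le_succ)).prodMk (hB.stronglyMeasurable_increment t))
  set Ŷ := forwardFlow F (t + 1) fun ω => q + Z ω *ᵥ M (t + 1) ω
  have hQ : StronglyMeasurable[𝓕 T] (Ŷ (T - (t + 1))) := by
    have h := stronglyMeasurable_forwardFlow hFmeas hY₀ (n := T - (t + 1)) (by omega)
    rwa [Nat.add_sub_cancel' ht] at h
  refine ⟨Ŷ (T - (t + 1)), hQ, hB.exists_norm_le hQ, ?_⟩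
  rintro ⟨Y, Z', hY, hZ', hsol⟩
  have hstep := fun s (hts : t ≤ s) (hsT : s < T) => ae_sub_add_eq_of_telescoped hsol hts hsT
  have hYŶ : Y (t + 1) =ᵐ[μ] Ŷ 0 :=
    hB.ae_eq_forwardFlow ht (fun s hs hsT => (hFbij s hsT (by omega) 0).mono fun ω h => h.injective)
      hY₀ hY hZ' (fun s hs => hstep s (by omega))
      (by filter_upwards [hsol T ht.le le_rfl] with ω h; simpa using h) (Nat.zero_le _)
  have hYt : ∀ᵐ ω ∂μ, Y t ω - F ω t (Y t ω) (Z ω) = q := by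
    refine hB.ae_sub_eq_of_step ht (G := fun _ => q) (hY t) stronglyMeasurable_const (hZ' t)
      hZmeas ?_
    filter_upwards [hstep t le_rfl ht, hYŶ] with ω h₁ h₂
    exact h₁.trans h₂
  exact hnosurj.ne' (measure_mono_null (fun ω h => h (Y t ω)) (ae_iff.mp hYt))

/-- necessity of surjectivity.  If `y ↦ y - F(ω,t,y,Z)` fails to be surjective
with positive probability (for some `𝓕 t`-measurable `Z`, missing a value `q`), then there is
a terminal condition `Q` for which the discrete BSDE admits no adapted solution on
`{t,…,T}`. -/
theorem necessity_of_surjectivity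
    {Ω : Type*} {m0 : MeasurableSpace Ω} {μ : Measure Ω} [IsProbabilityMeasure μ]
    {N K T : ℕ} (𝓕 : Filtration ℕ m0)
    (X : ℕ → Ω → (Fin N → ℝ))
    (hXval : ∀ t ω, ∃ i : Fin N, X t ω = fun j => if j = i then (1 : ℝ) else 0)
    (h𝓕 : ∀ t, (𝓕 t : MeasurableSpace Ω)
      = MeasurableSpace.comap (fun ω (s : Fin (t + 1)) => X (s : ℕ) ω) inferInstance)
    (hXint : ∀ t, Integrable (X t) μ)
    (M : ℕ → Ω → (Fin N → ℝ))
    (hM : ∀ t, M t = X t - μ[X t | 𝓕 (t - 1)])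
    (F : Ω → ℕ → (Fin K → ℝ) → (Fin K → Fin N → ℝ) → (Fin K → ℝ))
    (hFmeas : ∀ s < T, ∀ (Y : Ω → Fin K → ℝ) (Z : Ω → Fin K → Fin N → ℝ),
      StronglyMeasurable[𝓕 s] Y → StronglyMeasurable[𝓕 s] Z →
      StronglyMeasurable[𝓕 s] (fun ω => F ω s (Y ω) (Z ω)))
    (hFinv : ∀ s < T, ∀ (Y : Ω → Fin K → ℝ) (Z1 Z2 : Ω → Fin K → Fin N → ℝ),
      (∀ᵐ ω ∂μ, (fun i => ∑ j, Z1 ω i j * M (s + 1) ω j)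
          = (fun i => ∑ j, Z2 ω i j * M (s + 1) ω j)) →
      ∀ᵐ ω ∂μ, F ω s (Y ω) (Z1 ω) = F ω s (Y ω) (Z2 ω))
    (t : ℕ) (ht : t < T)
    -- bijectivity may be assumed at all other times
    (hFbij : ∀ s < T, s ≠ t → ∀ Z : Ω → Fin K → Fin N → ℝ,
      ∀ᵐ ω ∂μ, Function.Bijective (fun y : Fin K → ℝ => y - F ω s y (Z ω)))
    -- failure of surjectivity at time t with positive probability
    (Z : Ω → Fin K → Fin N → ℝ) (hZmeas : StronglyMeasurable[𝓕 t] Z)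
    (hZbdd : ∃ C, ∀ ω i j, |Z ω i j| ≤ C)
    (q : Fin K → ℝ)
    (hnosurj : 0 < μ {ω | ∀ y : Fin K → ℝ, y - F ω t y (Z ω) ≠ q}) :
    ∃ Q : Ω → Fin K → ℝ,
      StronglyMeasurable[𝓕 T] Q ∧ (∃ C, ∀ ω, ‖Q ω‖ ≤ C) ∧
      ¬ ∃ (Y : ℕ → Ω → Fin K → ℝ) (Z' : ℕ → Ω → Fin K → Fin N → ℝ),
          (∀ s, StronglyMeasurable[𝓕 s] (Y s)) ∧
          (∀ s, StronglyMeasurable[𝓕 s] (Z' s)) ∧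
          (∀ s, t ≤ s → s ≤ T → ∀ᵐ ω ∂μ,
            Y s ω - ∑ u ∈ Finset.Ico s T, F ω u (Y u ω) (Z' u ω)
              + ∑ u ∈ Finset.Ico s T, (fun i => ∑ j, Z' u ω i j * M (u + 1) ω j) = Q ω) :=
  necessity_of_surjectivity_general 𝓕 X hXval h𝓕 hXint M hM F hFmeas hFinv t ht hFbij Z hZmeas q
    hnosurj
end

section
/- Under the hypotheses of the existence theorem, for any t there is a bijection (up to a.s. equality and ∼_M equivalence) between (Y_0, {Z_s}_{s<t}) and Y_t, and between (Y_t, {Z_s}_{t≤s<T}) and Y_T. -/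
/-!
Since `𝓕` is generated by a chain with finitely many states, every `𝓕 s`-measurable variable is a
bounded function of the history up to time `s`, and an `𝓕 (s + 1)`-measurable `W` is
`Z *ᵥ X (s + 1)` for some `𝓕 s`-measurable `Z`; hence `W = μ[W | 𝓕 s] + Z *ᵥ M (s + 1)`.
One backward step then solves `y - F(y, Z) = μ[W | 𝓕 s]` using the bijectivity of
`y ↦ y - F(y, z)`. Conversely, conditioning the step equation on `𝓕 s` recovers `Y - F(Y, Z)`,
hence `Z *ᵥ M (s + 1)`; by the `∼_M`-invariance of `F` and injectivity, also `Y`.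
Iterating one step at a time gives both bijections.
-/

open MeasureTheory Matrix Function Set

namespace DiscreteBSDE

section MulVec

variable {Ω ι κ : Type*} [Fintype ι] [Fintype κ] {m m0 : MeasurableSpace Ω} {μ : Measure Ω}
  {Z : Ω → ι → κ → ℝ} {f : Ω → κ → ℝ} {C : ℝ}

/-- `Matrix` carries no norm, so matrices are taken in `ι → κ → ℝ` with its sup norm. -/
noncomputable def mulVecCLM : (ι → κ → ℝ) →L[ℝ] (κ → ℝ) →L[ℝ] ι → ℝ :=
  LinearMap.toContinuousLinearMap <|
    LinearMap.toContinuousLinearMap.toLinearMap ∘ₗ (mulVecBilin ℝ ℝ : Matrix ι κ ℝ →ₗ[ℝ] _)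

lemma integrable_mulVec_of_bound (hZ : AEStronglyMeasurable Z μ) (hC : ∀ ω, ‖Z ω‖ ≤ C)
    (hf : Integrable f μ) : Integrable (fun ω => Z ω *ᵥ f ω) μ :=
  mulVecCLM.integrable_of_bilin_of_bdd_left C hZ (ae_of_all _ hC) hf

lemma condExp_mulVec_of_stronglyMeasurable_left [IsFiniteMeasure μ] (hm : m ≤ m0)
    (hZ : StronglyMeasurable[m] Z) (hC : ∀ ω, ‖Z ω‖ ≤ C) (hf : Integrable f μ) :
    μ[fun ω => Z ω *ᵥ f ω | m] =ᵐ[μ] fun ω => Z ω *ᵥ μ[f | m] ω :=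
  condExp_stronglyMeasurable_bilin_of_bound mulVecCLM hm hZ hf C (ae_of_all _ hC)

lemma condExp_sub_condExp (hm : m ≤ m0) [SigmaFinite (μ.trim hm)] (hf : Integrable f μ) :
    μ[f - μ[f | m] | m] =ᵐ[μ] 0 := by
  filter_upwards [condExp_sub hf integrable_condExp m] with ω hω
  rw [hω, condExp_of_stronglyMeasurable hm stronglyMeasurable_condExp integrable_condExp,
    Pi.sub_apply, sub_self, Pi.zero_apply]

lemma ae_eq_condExp_add_mulVec_sub_condExp [IsFiniteMeasure μ] (hm : m ≤ m0)
    (hZ : StronglyMeasurable[m] Z) (hC : ∀ ω, ‖Z ω‖ ≤ C) (hf : Integrable f μ) :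
    (fun ω => Z ω *ᵥ f ω)
      =ᵐ[μ] μ[fun ω => Z ω *ᵥ f ω | m] + fun ω => Z ω *ᵥ (f - μ[f | m]) ω := by
  filter_upwards [condExp_mulVec_of_stronglyMeasurable_left hm hZ hC hf] with ω hω
  rw [Pi.add_apply, hω, ← mulVec_add (Z ω : Matrix ι κ ℝ), Pi.sub_apply, add_sub_cancel]

lemma condExp_add_mulVec_sub_condExp [IsFiniteMeasure μ] (hm : m ≤ m0) {A : Ω → ι → ℝ}
    (hA : StronglyMeasurable[m] A) (hAi : Integrable A μ) (hZ : StronglyMeasurable[m] Z)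
    (hC : ∀ ω, ‖Z ω‖ ≤ C) (hf : Integrable f μ) :
    μ[A + fun ω => Z ω *ᵥ (f - μ[f | m]) ω | m] =ᵐ[μ] A := by
  have hD : Integrable (f - μ[f | m]) μ := hf.sub integrable_condExp
  have hZD := integrable_mulVec_of_bound (hZ.mono hm).aestronglyMeasurable hC hD
  filter_upwards [condExp_add hAi hZD m, condExp_mulVec_of_stronglyMeasurable_left hm hZ hC hD,
    condExp_sub_condExp hm hf] with ω h_add h_pull h_zero
  rw [h_add, Pi.add_apply, h_pull, h_zero, condExp_of_stronglyMeasurable hm hA hAi,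
    Pi.zero_apply, mulVec_zero (Z ω : Matrix ι κ ℝ), add_zero]

end MulVec

section FiniteRange

variable {Ω Y Z : Type*} {π : Ω → Y} {g : Ω → Z}

lemma finite_range_of_factorsThrough (hπ : (range π).Finite) (hg : g.FactorsThrough π) :
    (range g).Finite := by
  have : Finite (range π) := hπ.to_subtype
  refine (finite_range fun y : range π => g y.2.choose).subset ?_
  rintro _ ⟨ω, rfl⟩
  exact ⟨⟨π ω, ω, rfl⟩, hg (Exists.choose_spec (⟨ω, rfl⟩ : ∃ ω', π ω' = π ω))⟩

lemma measurable_comap_of_factorsThrough [MeasurableSpace Y] [MeasurableSingletonClass Y]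
    [MeasurableSpace Z] (hπ : (range π).Finite) (hg : g.FactorsThrough π) :
    Measurable[MeasurableSpace.comap π inferInstance] g := by
  intro B _
  refine ⟨π '' (g ⁻¹' B), (hπ.subset (image_subset_range _ _)).measurableSet, ?_⟩
  ext ω
  exact ⟨fun ⟨ω', hω', h⟩ => by rwa [mem_preimage, ← hg h], fun h => ⟨ω, h, rfl⟩⟩

end FiniteRange

section OneHotFiltration

variable {Ω : Type*} {m0 : MeasurableSpace Ω} {N : ℕ}

def history (X : ℕ → Ω → Fin N → ℝ) (t : ℕ) (ω : Ω) : Fin (t + 1) → Fin N → ℝ :=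
  fun s => X s ω

lemma history_succ (X : ℕ → Ω → Fin N → ℝ) (t : ℕ) (ω : Ω) :
    history X (t + 1) ω = Fin.snoc (α := fun _ => Fin N → ℝ) (history X t ω) (X (t + 1) ω) := by
  funext r
  induction r using Fin.lastCases <;> simp [history]

structure IsOneHotFiltration (𝓕 : Filtration ℕ m0) (X : ℕ → Ω → Fin N → ℝ) : Prop where
  oneHot : ∀ t ω, ∃ i : Fin N, X t ω = fun j => if j = i then (1 : ℝ) else 0
  eq_comap : ∀ t, (𝓕 t : MeasurableSpace Ω) = MeasurableSpace.comap (history X t) inferInstance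

namespace IsOneHotFiltration

variable {𝓕 : Filtration ℕ m0} {X : ℕ → Ω → Fin N → ℝ} {t : ℕ}

lemma finite_range_history (h𝓕 : IsOneHotFiltration 𝓕 X) (t : ℕ) :
    (range (history X t)).Finite := by
  refine (Set.Finite.pi' fun _ =>
    finite_range fun (i : Fin N) (j : Fin N) => if j = i then (1 : ℝ) else 0).subset ?_
  rintro _ ⟨ω, rfl⟩ r
  obtain ⟨i, hi⟩ := h𝓕.oneHot r ω
  exact ⟨i, hi.symm⟩

lemma measurable_of_factorsThrough (h𝓕 : IsOneHotFiltration 𝓕 X) {β : Type*}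
    [MeasurableSpace β] {g : Ω → β} (hg : g.FactorsThrough (history X t)) :
    Measurable[𝓕 t] g := by
  rw [h𝓕.eq_comap t]
  exact measurable_comap_of_factorsThrough (h𝓕.finite_range_history t) hg

lemma factorsThrough (h𝓕 : IsOneHotFiltration 𝓕 X) {E : Type*} [TopologicalSpace E]
    [TopologicalSpace.PseudoMetrizableSpace E] [T1Space E] {g : Ω → E}
    (hg : StronglyMeasurable[𝓕 t] g) : g.FactorsThrough (history X t) := by
  rw [h𝓕.eq_comap t] at hg
  exact hg.factorsThrough

lemma exists_bound (h𝓕 : IsOneHotFiltration 𝓕 X) {E : Type*} [NormedAddCommGroup E]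
    {g : Ω → E} (hg : StronglyMeasurable[𝓕 t] g) : ∃ C, ∀ ω, ‖g ω‖ ≤ C := by
  obtain ⟨C, hC⟩ := ((finite_range_of_factorsThrough (h𝓕.finite_range_history t)
    (h𝓕.factorsThrough hg)).image norm).bddAbove
  exact ⟨C, fun ω => hC ⟨g ω, ⟨ω, rfl⟩, rfl⟩⟩

lemma integrable (h𝓕 : IsOneHotFiltration 𝓕 X) {μ : Measure Ω} [IsFiniteMeasure μ]
    {E : Type*} [NormedAddCommGroup E] {g : Ω → E} (hg : StronglyMeasurable[𝓕 t] g) :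
    Integrable g μ :=
  let ⟨C, hC⟩ := h𝓕.exists_bound hg
  .of_bound (hg.mono (𝓕.le t)).aestronglyMeasurable C (ae_of_all _ hC)

lemma stronglyAdapted (h𝓕 : IsOneHotFiltration 𝓕 X) : StronglyAdapted 𝓕 X := fun t =>
  (h𝓕.measurable_of_factorsThrough fun _ _ h => congrFun h (Fin.last t)).stronglyMeasurable

lemma exists_mulVec_eq (h𝓕 : IsOneHotFiltration 𝓕 X) {K : ℕ} {W : Ω → Fin K → ℝ}
    (hW : StronglyMeasurable[𝓕 (t + 1)] W) :
    ∃ Z : Ω → Fin K → Fin N → ℝ, StronglyMeasurable[𝓕 t] Z ∧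
      W = fun ω => Z ω *ᵥ X (t + 1) ω := by
  classical
  let Z ω i j := extend (history X (t + 1)) W 0
    (Fin.snoc (α := fun _ => Fin N → ℝ) (history X t ω) fun k => if k = j then 1 else 0) i
  refine ⟨Z, (h𝓕.measurable_of_factorsThrough fun ω ω' h => ?_).stronglyMeasurable, ?_⟩
  · simp only [Z, h]
  · funext ω i
    obtain ⟨j, hj⟩ := h𝓕.oneHot (t + 1) ω
    have hZ : Z ω i j = W ω i := by
      simp only [Z, ← hj, ← history_succ, (h𝓕.factorsThrough hW).extend_apply]
    simp [mulVec, dotProduct, hj, hZ]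

end IsOneHotFiltration

end OneHotFiltration

section OneStep

variable {Ω : Type*} {m0 : MeasurableSpace Ω} {μ : Measure Ω} [IsFiniteMeasure μ] {N K s : ℕ}
  {𝓕 : Filtration ℕ m0} {X M : ℕ → Ω → Fin N → ℝ}

namespace IsOneHotFiltration

lemma exists_martingale_representation (h𝓕 : IsOneHotFiltration 𝓕 X)
    (hM : M (s + 1) = X (s + 1) - μ[X (s + 1) | 𝓕 s]) {W : Ω → Fin K → ℝ}
    (hW : StronglyMeasurable[𝓕 (s + 1)] W) :
    ∃ Z : Ω → Fin K → Fin N → ℝ, StronglyMeasurable[𝓕 s] Z ∧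
      W =ᵐ[μ] μ[W | 𝓕 s] + fun ω => Z ω *ᵥ M (s + 1) ω := by
  obtain ⟨Z, hZ, rfl⟩ := h𝓕.exists_mulVec_eq hW
  obtain ⟨C, hC⟩ := h𝓕.exists_bound hZ
  refine ⟨Z, hZ, ?_⟩
  rw [hM]
  exact ae_eq_condExp_add_mulVec_sub_condExp (𝓕.le s) hZ hC
    (h𝓕.integrable (h𝓕.stronglyAdapted (s + 1)))

lemma condExp_add_mulVec_increment (h𝓕 : IsOneHotFiltration 𝓕 X)
    (hM : M (s + 1) = X (s + 1) - μ[X (s + 1) | 𝓕 s]) {A : Ω → Fin K → ℝ}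
    {Z : Ω → Fin K → Fin N → ℝ} (hA : StronglyMeasurable[𝓕 s] A)
    (hZ : StronglyMeasurable[𝓕 s] Z) :
    μ[A + fun ω => Z ω *ᵥ M (s + 1) ω | 𝓕 s] =ᵐ[μ] A := by
  obtain ⟨C, hC⟩ := h𝓕.exists_bound hZ
  rw [hM]
  exact condExp_add_mulVec_sub_condExp (𝓕.le s) hA (h𝓕.integrable hA) hZ hC
    (h𝓕.integrable (h𝓕.stronglyAdapted (s + 1)))

variable {g : Ω → (Fin K → ℝ) → (Fin K → Fin N → ℝ) → Fin K → ℝ}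

lemma exists_backward_step (h𝓕 : IsOneHotFiltration 𝓕 X)
    (hM : M (s + 1) = X (s + 1) - μ[X (s + 1) | 𝓕 s])
    (hg : ∀ (Y : Ω → Fin K → ℝ) (Z : Ω → Fin K → Fin N → ℝ), StronglyMeasurable[𝓕 s] Y →
      StronglyMeasurable[𝓕 s] Z → StronglyMeasurable[𝓕 s] fun ω => g ω (Y ω) (Z ω))
    (hg_bij : ∀ Z : Ω → Fin K → Fin N → ℝ,
      ∀ᵐ ω ∂μ, Bijective fun y : Fin K → ℝ => y - g ω y (Z ω))
    {W : Ω → Fin K → ℝ} (hW : StronglyMeasurable[𝓕 (s + 1)] W) :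
    ∃ (Y : Ω → Fin K → ℝ) (Z : Ω → Fin K → Fin N → ℝ),
      StronglyMeasurable[𝓕 s] Y ∧ StronglyMeasurable[𝓕 s] Z ∧
      W =ᵐ[μ] fun ω => Y ω - g ω (Y ω) (Z ω) + Z ω *ᵥ M (s + 1) ω := by
  obtain ⟨Z, hZ, hW_rep⟩ := h𝓕.exists_martingale_representation hM hW
  let Y ω := invFun (fun y => y - g ω y (Z ω)) (μ[W | 𝓕 s] ω)
  have hY : StronglyMeasurable[𝓕 s] Y := by
    refine (h𝓕.measurable_of_factorsThrough fun ω ω' h => ?_).stronglyMeasurable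
    have hg_eq (y : Fin K → ℝ) : g ω y (Z ω) = g ω' y (Z ω') :=
      h𝓕.factorsThrough (hg (fun _ => y) Z stronglyMeasurable_const hZ) h
    simp only [Y, hg_eq, h𝓕.factorsThrough stronglyMeasurable_condExp h]
  refine ⟨Y, Z, hY, hZ, ?_⟩
  filter_upwards [hW_rep, hg_bij Z] with ω hω hbij
  rw [hω, Pi.add_apply, invFun_eq (hbij.surjective _)]

lemma ae_eq_of_step_ae_eq (h𝓕 : IsOneHotFiltration 𝓕 X)
    (hM : M (s + 1) = X (s + 1) - μ[X (s + 1) | 𝓕 s])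
    (hg : ∀ (Y : Ω → Fin K → ℝ) (Z : Ω → Fin K → Fin N → ℝ), StronglyMeasurable[𝓕 s] Y →
      StronglyMeasurable[𝓕 s] Z → StronglyMeasurable[𝓕 s] fun ω => g ω (Y ω) (Z ω))
    (hg_inv : ∀ (Y : Ω → Fin K → ℝ) (Z Z' : Ω → Fin K → Fin N → ℝ),
      (fun ω => Z ω *ᵥ M (s + 1) ω) =ᵐ[μ] (fun ω => Z' ω *ᵥ M (s + 1) ω) →
      ∀ᵐ ω ∂μ, g ω (Y ω) (Z ω) = g ω (Y ω) (Z' ω))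
    (hg_bij : ∀ Z : Ω → Fin K → Fin N → ℝ,
      ∀ᵐ ω ∂μ, Bijective fun y : Fin K → ℝ => y - g ω y (Z ω))
    {Y Y' : Ω → Fin K → ℝ} {Z Z' : Ω → Fin K → Fin N → ℝ}
    (hY : StronglyMeasurable[𝓕 s] Y) (hZ : StronglyMeasurable[𝓕 s] Z)
    (hY' : StronglyMeasurable[𝓕 s] Y') (hZ' : StronglyMeasurable[𝓕 s] Z')
    (h : (fun ω => Y ω - g ω (Y ω) (Z ω) + Z ω *ᵥ M (s + 1) ω)
      =ᵐ[μ] fun ω => Y' ω - g ω (Y' ω) (Z' ω) + Z' ω *ᵥ M (s + 1) ω) :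
    Y =ᵐ[μ] Y' ∧ (fun ω => Z ω *ᵥ M (s + 1) ω) =ᵐ[μ] fun ω => Z' ω *ᵥ M (s + 1) ω := by
  have hA : (fun ω => Y ω - g ω (Y ω) (Z ω)) =ᵐ[μ] fun ω => Y' ω - g ω (Y' ω) (Z' ω) :=
    (h𝓕.condExp_add_mulVec_increment hM (hY.sub (hg Y Z hY hZ)) hZ).symm.trans <|
      (condExp_congr_ae h).trans <|
        h𝓕.condExp_add_mulVec_increment hM (hY'.sub (hg Y' Z' hY' hZ')) hZ'
  have hZM : (fun ω => Z ω *ᵥ M (s + 1) ω) =ᵐ[μ] fun ω => Z' ω *ᵥ M (s + 1) ω := by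
    filter_upwards [h, hA] with ω hω hAω
    exact add_left_cancel (hAω ▸ hω)
  refine ⟨?_, hZM⟩
  filter_upwards [hA, hg_inv Y Z Z' hZM, hg_bij Z'] with ω hAω hgω hbij
  exact hbij.injective (hgω ▸ hAω)

end IsOneHotFiltration

end OneStep

section MultiStep

variable {Ω : Type*} {m0 : MeasurableSpace Ω} {μ : Measure Ω} {N K T : ℕ}
  {𝓕 : Filtration ℕ m0} {X M : ℕ → Ω → Fin N → ℝ}
  {F : Ω → ℕ → (Fin K → ℝ) → (Fin K → Fin N → ℝ) → Fin K → ℝ}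

lemma stronglyAdapted_update {ι β : Type*} [Preorder ι] [DecidableEq ι] [TopologicalSpace β]
    {𝓕 : Filtration ι m0} {Y : ι → Ω → β} (hY : StronglyAdapted 𝓕 Y) {a : ι} {y : Ω → β}
    (hy : StronglyMeasurable[𝓕 a] y) : StronglyAdapted 𝓕 (update Y a y) := by
  intro i
  rcases eq_or_ne i a with rfl | hi
  · simpa using hy
  · simpa [hi] using hY i

def IsSolutionOn (μ : Measure Ω) (F : Ω → ℕ → (Fin K → ℝ) → (Fin K → Fin N → ℝ) → Fin K → ℝ)
    (M : ℕ → Ω → Fin N → ℝ) (a b : ℕ) (Y : ℕ → Ω → Fin K → ℝ)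
    (Z : ℕ → Ω → Fin K → Fin N → ℝ) : Prop :=
  ∀ s, a ≤ s → s < b →
    Y (s + 1) =ᵐ[μ] fun ω => Y s ω - F ω s (Y s ω) (Z s ω) + Z s ω *ᵥ M (s + 1) ω

variable [IsFiniteMeasure μ]

lemma IsOneHotFiltration.exists_isSolutionOn (h𝓕 : IsOneHotFiltration 𝓕 X)
    (hM : ∀ t, M t = X t - μ[X t | 𝓕 (t - 1)])
    (hF : ∀ s < T, ∀ (Y : Ω → Fin K → ℝ) (Z : Ω → Fin K → Fin N → ℝ),
      StronglyMeasurable[𝓕 s] Y → StronglyMeasurable[𝓕 s] Z →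
      StronglyMeasurable[𝓕 s] fun ω => F ω s (Y ω) (Z ω))
    (hF_bij : ∀ s < T, ∀ Z : Ω → Fin K → Fin N → ℝ,
      ∀ᵐ ω ∂μ, Bijective fun y : Fin K → ℝ => y - F ω s y (Z ω))
    {a b : ℕ} (hab : a ≤ b) (hb : b ≤ T) {Yb : Ω → Fin K → ℝ}
    (hYb : StronglyMeasurable[𝓕 b] Yb) :
    ∃ (Y : ℕ → Ω → Fin K → ℝ) (Z : ℕ → Ω → Fin K → Fin N → ℝ),
      StronglyAdapted 𝓕 Y ∧ StronglyAdapted 𝓕 Z ∧ IsSolutionOn μ F M a b Y Z ∧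
        Y b =ᵐ[μ] Yb := by
  induction hab using Nat.decreasingInduction with
  | self =>
    exact ⟨update 0 b Yb, 0, stronglyAdapted_update (fun _ => stronglyMeasurable_const) hYb,
      fun _ => stronglyMeasurable_const, fun s hbs hsb => absurd hbs hsb.not_ge, by simp⟩
  | of_succ a hab ih =>
    obtain ⟨Y, Z, hY, hZ, hsol, hYb'⟩ := ih
    obtain ⟨y, z, hy, hz, hstep⟩ := h𝓕.exists_backward_step (hM (a + 1)) (hF a (by omega))
      (hF_bij a (by omega)) (hY (a + 1))
    refine ⟨update Y a y, update Z a z, stronglyAdapted_update hY hy,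
      stronglyAdapted_update hZ hz, fun s has hsb => ?_, by simpa [hab.ne'] using hYb'⟩
    rcases has.eq_or_lt with rfl | has
    · simpa using hstep
    · simpa [has.ne', (has.trans (Nat.lt_succ_self s)).ne'] using hsol s has hsb

lemma IsOneHotFiltration.isSolutionOn_unique (h𝓕 : IsOneHotFiltration 𝓕 X)
    (hM : ∀ t, M t = X t - μ[X t | 𝓕 (t - 1)])
    (hF : ∀ s < T, ∀ (Y : Ω → Fin K → ℝ) (Z : Ω → Fin K → Fin N → ℝ),
      StronglyMeasurable[𝓕 s] Y → StronglyMeasurable[𝓕 s] Z →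
      StronglyMeasurable[𝓕 s] fun ω => F ω s (Y ω) (Z ω))
    (hF_inv : ∀ s < T, ∀ (Y : Ω → Fin K → ℝ) (Z Z' : Ω → Fin K → Fin N → ℝ),
      (fun ω => Z ω *ᵥ M (s + 1) ω) =ᵐ[μ] (fun ω => Z' ω *ᵥ M (s + 1) ω) →
      ∀ᵐ ω ∂μ, F ω s (Y ω) (Z ω) = F ω s (Y ω) (Z' ω))
    (hF_bij : ∀ s < T, ∀ Z : Ω → Fin K → Fin N → ℝ,
      ∀ᵐ ω ∂μ, Bijective fun y : Fin K → ℝ => y - F ω s y (Z ω))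
    {a b : ℕ} (hb : b ≤ T) {Y Y' : ℕ → Ω → Fin K → ℝ} {Z Z' : ℕ → Ω → Fin K → Fin N → ℝ}
    (hY : StronglyAdapted 𝓕 Y) (hZ : StronglyAdapted 𝓕 Z)
    (hY' : StronglyAdapted 𝓕 Y') (hZ' : StronglyAdapted 𝓕 Z')
    (hsol : IsSolutionOn μ F M a b Y Z) (hsol' : IsSolutionOn μ F M a b Y' Z')
    (hYb : Y b =ᵐ[μ] Y' b) :
    (∀ s, a ≤ s → s ≤ b → Y s =ᵐ[μ] Y' s) ∧
      ∀ s, a ≤ s → s < b →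
        (fun ω => Z s ω *ᵥ M (s + 1) ω) =ᵐ[μ] fun ω => Z' s ω *ᵥ M (s + 1) ω := by
  have step (s : ℕ) (has : a ≤ s) (hsb : s < b) (hs : Y (s + 1) =ᵐ[μ] Y' (s + 1)) :=
    h𝓕.ae_eq_of_step_ae_eq (hM (s + 1)) (hF s (by omega)) (hF_inv s (by omega))
      (hF_bij s (by omega)) (hY s) (hZ s) (hY' s) (hZ' s)
      ((hsol s has hsb).symm.trans (hs.trans (hsol' s has hsb)))
  have hY_eq (s : ℕ) (has : a ≤ s) (hsb : s ≤ b) : Y s =ᵐ[μ] Y' s := by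
    induction hsb using Nat.decreasingInduction with
    | self => exact hYb
    | of_succ s hsb ih => exact (step s has hsb (ih (by omega))).1
  exact ⟨hY_eq, fun s has hsb => (step s has hsb (hY_eq (s + 1) (by omega) hsb)).2⟩

end MultiStep

end DiscreteBSDE

theorem multi_step_bijection_general
    {Ω : Type*} {m0 : MeasurableSpace Ω} {μ : Measure Ω} [IsProbabilityMeasure μ]
    {N K T : ℕ} (𝓕 : Filtration ℕ m0)
    (X : ℕ → Ω → (Fin N → ℝ))
    (hXval : ∀ t ω, ∃ i : Fin N, X t ω = fun j => if j = i then (1 : ℝ) else 0)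
    (h𝓕 : ∀ t, (𝓕 t : MeasurableSpace Ω)
      = MeasurableSpace.comap (fun ω (s : Fin (t + 1)) => X (s : ℕ) ω) inferInstance)
    (M : ℕ → Ω → (Fin N → ℝ))
    (hM : ∀ t, M t = X t - μ[X t | 𝓕 (t - 1)])
    (F : Ω → ℕ → (Fin K → ℝ) → (Fin K → Fin N → ℝ) → (Fin K → ℝ))
    (hFmeas : ∀ s < T, ∀ (Y : Ω → Fin K → ℝ) (Z : Ω → Fin K → Fin N → ℝ),
      StronglyMeasurable[𝓕 s] Y → StronglyMeasurable[𝓕 s] Z →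
      StronglyMeasurable[𝓕 s] (fun ω => F ω s (Y ω) (Z ω)))
    (hFinv : ∀ s < T, ∀ (Y : Ω → Fin K → ℝ) (Z1 Z2 : Ω → Fin K → Fin N → ℝ),
      (∀ᵐ ω ∂μ, (fun i => ∑ j, Z1 ω i j * M (s + 1) ω j)
          = (fun i => ∑ j, Z2 ω i j * M (s + 1) ω j)) →
      ∀ᵐ ω ∂μ, F ω s (Y ω) (Z1 ω) = F ω s (Y ω) (Z2 ω))
    (hFbij : ∀ s < T, ∀ Z : Ω → Fin K → Fin N → ℝ,
      ∀ᵐ ω ∂μ, Function.Bijective (fun y : Fin K → ℝ => y - F ω s y (Z ω)))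
    (t : ℕ) (ht : t ≤ T) :
    -- Bijection between (Y 0, {Z s}_{s < t}) and Y t:
    ((∀ Yt : Ω → Fin K → ℝ,
        StronglyMeasurable[𝓕 t] Yt → (∃ C, ∀ ω, ‖Yt ω‖ ≤ C) →
        ∃ (Y : ℕ → Ω → Fin K → ℝ) (Z : ℕ → Ω → Fin K → Fin N → ℝ),
          (∀ s, StronglyMeasurable[𝓕 s] (Y s)) ∧ (∀ s, StronglyMeasurable[𝓕 s] (Z s)) ∧
          (∀ s < t, ∀ᵐ ω ∂μ,
            Y (s + 1) ω
              = Y s ω - F ω s (Y s ω) (Z s ω) + (fun i => ∑ j, Z s ω i j * M (s + 1) ω j)) ∧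
          Y t =ᵐ[μ] Yt) ∧
      (∀ (Y Y' : ℕ → Ω → Fin K → ℝ) (Z Z' : ℕ → Ω → Fin K → Fin N → ℝ),
        (∀ s, StronglyMeasurable[𝓕 s] (Y s)) → (∀ s, StronglyMeasurable[𝓕 s] (Z s)) →
        (∀ s, StronglyMeasurable[𝓕 s] (Y' s)) → (∀ s, StronglyMeasurable[𝓕 s] (Z' s)) →
        (∀ s < t, ∀ᵐ ω ∂μ,
          Y (s + 1) ω
            = Y s ω - F ω s (Y s ω) (Z s ω) + (fun i => ∑ j, Z s ω i j * M (s + 1) ω j)) →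
        (∀ s < t, ∀ᵐ ω ∂μ,
          Y' (s + 1) ω
            = Y' s ω - F ω s (Y' s ω) (Z' s ω)
              + (fun i => ∑ j, Z' s ω i j * M (s + 1) ω j)) →
        Y t =ᵐ[μ] Y' t →
        (Y 0 =ᵐ[μ] Y' 0) ∧
        ∀ s < t, ∀ᵐ ω ∂μ,
          (fun i => ∑ j, Z s ω i j * M (s + 1) ω j)
            = (fun i => ∑ j, Z' s ω i j * M (s + 1) ω j))) ∧
    -- Bijection between (Y t, {Z s}_{t ≤ s < T}) and Y T:
    ((∀ YT : Ω → Fin K → ℝ,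
        StronglyMeasurable[𝓕 T] YT → (∃ C, ∀ ω, ‖YT ω‖ ≤ C) →
        ∃ (Y : ℕ → Ω → Fin K → ℝ) (Z : ℕ → Ω → Fin K → Fin N → ℝ),
          (∀ s, StronglyMeasurable[𝓕 s] (Y s)) ∧ (∀ s, StronglyMeasurable[𝓕 s] (Z s)) ∧
          (∀ s, t ≤ s → s < T → ∀ᵐ ω ∂μ,
            Y (s + 1) ω
              = Y s ω - F ω s (Y s ω) (Z s ω) + (fun i => ∑ j, Z s ω i j * M (s + 1) ω j)) ∧
          Y T =ᵐ[μ] YT) ∧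
      (∀ (Y Y' : ℕ → Ω → Fin K → ℝ) (Z Z' : ℕ → Ω → Fin K → Fin N → ℝ),
        (∀ s, StronglyMeasurable[𝓕 s] (Y s)) → (∀ s, StronglyMeasurable[𝓕 s] (Z s)) →
        (∀ s, StronglyMeasurable[𝓕 s] (Y' s)) → (∀ s, StronglyMeasurable[𝓕 s] (Z' s)) →
        (∀ s, t ≤ s → s < T → ∀ᵐ ω ∂μ,
          Y (s + 1) ω
            = Y s ω - F ω s (Y s ω) (Z s ω) + (fun i => ∑ j, Z s ω i j * M (s + 1) ω j)) →
        (∀ s, t ≤ s → s < T → ∀ᵐ ω ∂μ,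
          Y' (s + 1) ω
            = Y' s ω - F ω s (Y' s ω) (Z' s ω)
              + (fun i => ∑ j, Z' s ω i j * M (s + 1) ω j)) →
        Y T =ᵐ[μ] Y' T →
        (Y t =ᵐ[μ] Y' t) ∧
        ∀ s, t ≤ s → s < T → ∀ᵐ ω ∂μ,
          (fun i => ∑ j, Z s ω i j * M (s + 1) ω j)
            = (fun i => ∑ j, Z' s ω i j * M (s + 1) ω j))) := by
  have hX : DiscreteBSDE.IsOneHotFiltration 𝓕 X := ⟨hXval, h𝓕⟩
  refine ⟨⟨fun Yt hYt _ => ?_, fun Y Y' Z Z' hY hZ hY' hZ' hsol hsol' hYt => ?_⟩,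
    fun YT hYT _ => ?_, fun Y Y' Z Z' hY hZ hY' hZ' hsol hsol' hYT => ?_⟩
  · obtain ⟨Y, Z, hY, hZ, hsol, hYt'⟩ := hX.exists_isSolutionOn hM hFmeas hFbij t.zero_le ht hYt
    exact ⟨Y, Z, hY, hZ, fun s hs => hsol s s.zero_le hs, hYt'⟩
  · obtain ⟨hY_eq, hZM⟩ := hX.isSolutionOn_unique hM hFmeas hFinv hFbij ht hY hZ hY' hZ'
      (fun s _ hs => hsol s hs) (fun s _ hs => hsol' s hs) hYt
    exact ⟨hY_eq 0 le_rfl t.zero_le, fun s hs => hZM s s.zero_le hs⟩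
  · exact hX.exists_isSolutionOn hM hFmeas hFbij ht le_rfl hYT
  · obtain ⟨hY_eq, hZM⟩ := hX.isSolutionOn_unique hM hFmeas hFinv hFbij le_rfl hY hZ hY' hZ'
      hsol hsol' hYT
    exact ⟨hY_eq t le_rfl ht, hZM⟩

/-- multi-step bijection.  Under the hypotheses of the existence theorem,
for any `t ≤ T` there is a bijection (up to a.s. equality and `∼_M`-equivalence) between
`(Y 0, {Z s}_{s<t})` and `Y t`, and between `(Y t, {Z s}_{t ≤ s < T})` and `Y T`, where the
dynamics are `Y (s+1) = Y s - F(ω,s,Y s,Z s) + Z s • M (s+1)`. -/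
theorem multi_step_bijection
    {Ω : Type*} {m0 : MeasurableSpace Ω} {μ : Measure Ω} [IsProbabilityMeasure μ]
    {N K T : ℕ} (𝓕 : Filtration ℕ m0)
    (X : ℕ → Ω → (Fin N → ℝ))
    (hXval : ∀ t ω, ∃ i : Fin N, X t ω = fun j => if j = i then (1 : ℝ) else 0)
    (h𝓕 : ∀ t, (𝓕 t : MeasurableSpace Ω)
      = MeasurableSpace.comap (fun ω (s : Fin (t + 1)) => X (s : ℕ) ω) inferInstance)
    (hXint : ∀ t, Integrable (X t) μ)
    (M : ℕ → Ω → (Fin N → ℝ))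
    (hM : ∀ t, M t = X t - μ[X t | 𝓕 (t - 1)])
    (F : Ω → ℕ → (Fin K → ℝ) → (Fin K → Fin N → ℝ) → (Fin K → ℝ))
    (hFmeas : ∀ s < T, ∀ (Y : Ω → Fin K → ℝ) (Z : Ω → Fin K → Fin N → ℝ),
      StronglyMeasurable[𝓕 s] Y → StronglyMeasurable[𝓕 s] Z →
      StronglyMeasurable[𝓕 s] (fun ω => F ω s (Y ω) (Z ω)))
    (hFinv : ∀ s < T, ∀ (Y : Ω → Fin K → ℝ) (Z1 Z2 : Ω → Fin K → Fin N → ℝ),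
      (∀ᵐ ω ∂μ, (fun i => ∑ j, Z1 ω i j * M (s + 1) ω j)
          = (fun i => ∑ j, Z2 ω i j * M (s + 1) ω j)) →
      ∀ᵐ ω ∂μ, F ω s (Y ω) (Z1 ω) = F ω s (Y ω) (Z2 ω))
    (hFbij : ∀ s < T, ∀ Z : Ω → Fin K → Fin N → ℝ,
      ∀ᵐ ω ∂μ, Function.Bijective (fun y : Fin K → ℝ => y - F ω s y (Z ω)))
    (t : ℕ) (ht : t ≤ T) :
    -- Bijection between (Y 0, {Z s}_{s < t}) and Y t:
    ((∀ Yt : Ω → Fin K → ℝ,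
        StronglyMeasurable[𝓕 t] Yt → (∃ C, ∀ ω, ‖Yt ω‖ ≤ C) →
        ∃ (Y : ℕ → Ω → Fin K → ℝ) (Z : ℕ → Ω → Fin K → Fin N → ℝ),
          (∀ s, StronglyMeasurable[𝓕 s] (Y s)) ∧ (∀ s, StronglyMeasurable[𝓕 s] (Z s)) ∧
          (∀ s < t, ∀ᵐ ω ∂μ,
            Y (s + 1) ω
              = Y s ω - F ω s (Y s ω) (Z s ω) + (fun i => ∑ j, Z s ω i j * M (s + 1) ω j)) ∧
          Y t =ᵐ[μ] Yt) ∧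
      (∀ (Y Y' : ℕ → Ω → Fin K → ℝ) (Z Z' : ℕ → Ω → Fin K → Fin N → ℝ),
        (∀ s, StronglyMeasurable[𝓕 s] (Y s)) → (∀ s, StronglyMeasurable[𝓕 s] (Z s)) →
        (∀ s, StronglyMeasurable[𝓕 s] (Y' s)) → (∀ s, StronglyMeasurable[𝓕 s] (Z' s)) →
        (∀ s < t, ∀ᵐ ω ∂μ,
          Y (s + 1) ω
            = Y s ω - F ω s (Y s ω) (Z s ω) + (fun i => ∑ j, Z s ω i j * M (s + 1) ω j)) →
        (∀ s < t, ∀ᵐ ω ∂μ,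
          Y' (s + 1) ω
            = Y' s ω - F ω s (Y' s ω) (Z' s ω)
              + (fun i => ∑ j, Z' s ω i j * M (s + 1) ω j)) →
        Y t =ᵐ[μ] Y' t →
        (Y 0 =ᵐ[μ] Y' 0) ∧
        ∀ s < t, ∀ᵐ ω ∂μ,
          (fun i => ∑ j, Z s ω i j * M (s + 1) ω j)
            = (fun i => ∑ j, Z' s ω i j * M (s + 1) ω j))) ∧
    -- Bijection between (Y t, {Z s}_{t ≤ s < T}) and Y T:
    ((∀ YT : Ω → Fin K → ℝ,
        StronglyMeasurable[𝓕 T] YT → (∃ C, ∀ ω, ‖YT ω‖ ≤ C) →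
        ∃ (Y : ℕ → Ω → Fin K → ℝ) (Z : ℕ → Ω → Fin K → Fin N → ℝ),
          (∀ s, StronglyMeasurable[𝓕 s] (Y s)) ∧ (∀ s, StronglyMeasurable[𝓕 s] (Z s)) ∧
          (∀ s, t ≤ s → s < T → ∀ᵐ ω ∂μ,
            Y (s + 1) ω
              = Y s ω - F ω s (Y s ω) (Z s ω) + (fun i => ∑ j, Z s ω i j * M (s + 1) ω j)) ∧
          Y T =ᵐ[μ] YT) ∧
      (∀ (Y Y' : ℕ → Ω → Fin K → ℝ) (Z Z' : ℕ → Ω → Fin K → Fin N → ℝ),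
        (∀ s, StronglyMeasurable[𝓕 s] (Y s)) → (∀ s, StronglyMeasurable[𝓕 s] (Z s)) →
        (∀ s, StronglyMeasurable[𝓕 s] (Y' s)) → (∀ s, StronglyMeasurable[𝓕 s] (Z' s)) →
        (∀ s, t ≤ s → s < T → ∀ᵐ ω ∂μ,
          Y (s + 1) ω
            = Y s ω - F ω s (Y s ω) (Z s ω) + (fun i => ∑ j, Z s ω i j * M (s + 1) ω j)) →
        (∀ s, t ≤ s → s < T → ∀ᵐ ω ∂μ,
          Y' (s + 1) ω
            = Y' s ω - F ω s (Y' s ω) (Z' s ω)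
              + (fun i => ∑ j, Z' s ω i j * M (s + 1) ω j)) →
        Y T =ᵐ[μ] Y' T →
        (Y t =ᵐ[μ] Y' t) ∧
        ∀ s, t ≤ s → s < T → ∀ᵐ ω ∂μ,
          (fun i => ∑ j, Z s ω i j * M (s + 1) ω j)
            = (fun i => ∑ j, Z' s ω i j * M (s + 1) ω j))) :=
  multi_step_bijection_general 𝓕 X hXval h𝓕 M hM F hFmeas hFinv hFbij t ht
end

section
/- (Comparison theorem) Let (Y^1,Z^1), (Y^2,Z^2) solve discrete BSDEs with drivers F^1, F^2 and terminal conditions Q^1, Q^2, both satisfying the existence theorem. Assume componentwise a.s.: (i) Q^1 ≥ Q^2; (ii) F^1(ω,t,Y^2_t,Z^2_t) ≥ F^2(ω,t,Y^2_t,Z^2_t) for all t; (iii) for all t and i, e_i^* F^1(ω,t,Y^2_t,Z^1_t) - e_i^* F^1(ω,t,Y^2_t,Z^2_t) ≥ min_{j ∈ J_t} e_i^*(Z^1_t - Z^2_t)(e_j - E[X_{t+1}|F_t]), where J_t := {j : P(X_{t+1}=e_j|F_t) > 0}; (iv) for all t, if Y^1_t - F^1(ω,t,Y^1_t,Z^1_t)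 ≥ Y^2_t - F^1(ω,t,Y^2_t,Z^1_t) then Y^1_t ≥ Y^2_t. Then Y^1_t ≥ Y^2_t a.s. for all t. -/
/-!
Backward induction on `t`. Subtracting the one-step equations of the two solutions and using
(ii) and `Y²_{t+1} ≤ Y¹_{t+1}` gives `G - D ≤ (Z¹_t - Z²_t) M_{t+1}` with
`G := F¹(Y²_t, Z¹_t) - F¹(Y²_t, Z²_t)` and `D := (Y¹_t - F¹(Y¹_t, Z¹_t)) - (Y²_t - F¹(Y²_t, Z¹_t))`,
where everything but `X_{t+1}` is `𝓕_t`-measurable. On the `𝓕_t`-event where this bound would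
fail for `X_{t+1} = e_j`, the coordinate `X^j_{t+1}` vanishes a.s., hence so does its conditional
expectation `P(X_{t+1} = e_j | 𝓕_t)`. So `G - D ≤ Jmin` a.s., (iii) gives `D ≥ 0`, and (iv)
concludes.
-/

open MeasureTheory

/-- `Jmin p d` is `min_{j ∈ J} (e_j - p)·d = min_{j : p j > 0} (d j - ⟨d, p⟩)`, the minimum
over the indices `j` of positive conditional probability of
`e_i^*(Z¹-Z²)(e_j - E[X_{t+1}|𝓕 t])` with `d` the relevant row of `Z¹ - Z²` and
`p = E[X_{t+1}|𝓕 t]`. -/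
noncomputable def Jmin {N : ℕ} (p d : Fin N → ℝ) : ℝ :=
  sInf {a : ℝ | ∃ j, 0 < p j ∧ a = d j - ∑ l, d l * p l}

theorem le_Jmin {N : ℕ} {p d : Fin N → ℝ} {c : ℝ} (hp : ∃ j, 0 < p j)
    (h : ∀ j, 0 < p j → c ≤ d j - ∑ l, d l * p l) : c ≤ Jmin p d := by
  obtain ⟨j, hj⟩ := hp
  exact le_csInf ⟨_, j, hj, rfl⟩ fun _ ⟨k, hk, hb⟩ => hb ▸ h k hk

theorem sum_mul_single_sub {N : ℕ} (d p : Fin N → ℝ) (j : Fin N) :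
    ∑ l, d l * ((Pi.single j 1 : Fin N → ℝ) l - p l) = d j - ∑ l, d l * p l := by
  simp [mul_sub, Finset.sum_sub_distrib, Pi.single_apply]

section CondExp

variable {Ω E : Type*} {m m0 : MeasurableSpace Ω} {μ : Measure Ω}
  [NormedAddCommGroup E] [NormedSpace ℝ E] [CompleteSpace E]

theorem ae_condExp_eq_zero_on_of_ae_eq_zero_on {f : Ω → E} (hf : Integrable f μ) {s : Set Ω}
    (hs : MeasurableSet[m] s) (h : ∀ᵐ ω ∂μ, ω ∈ s → f ω = 0) :
    ∀ᵐ ω ∂μ, ω ∈ s → μ[f | m] ω = 0 := by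
  have hind : s.indicator f =ᵐ[μ] 0 := by
    filter_upwards [h] with ω hω
    by_cases hωs : ω ∈ s <;> simp [hωs, hω]
  filter_upwards [condExp_indicator hf hs, condExp_congr_ae (m := m) hind] with ω h1 h2 hωs
  simpa [condExp_zero, hωs, h2] using h1.symm

end CondExp

section BasisValued

variable {Ω : Type*} {m m0 : MeasurableSpace Ω} {μ : Measure Ω} {N : ℕ}
  {X : Ω → Fin N → ℝ}

theorem ae_sum_condExp_eq_one [IsFiniteMeasure μ] (hm : m ≤ m0)
    (hX : ∀ ω, ∃ i, X ω = Pi.single i 1) (hXint : Integrable X μ) :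
    ∀ᵐ ω ∂μ, ∑ l, μ[X | m] ω l = 1 := by
  let S : (Fin N → ℝ) →L[ℝ] ℝ := ∑ l, ContinuousLinearMap.proj l
  have hSX : S ∘ X = fun _ => 1 := by
    funext ω
    obtain ⟨i, hi⟩ := hX ω
    simp [S, hi]
  filter_upwards [S.comp_condExp_comm hXint (m := m)] with ω hω
  simpa [S, hSX, condExp_const hm] using hω

theorem ae_le_of_condExp_pos
    (hX : ∀ ω, ∃ i, X ω = Pi.single i 1) (hXint : Integrable X μ)
    {c : Ω → ℝ} {d : Ω → Fin N → ℝ} (hc : Measurable[m] c) (hd : Measurable[m] d)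
    (h : ∀ᵐ ω ∂μ, c ω ≤ ∑ l, d ω l * (X ω l - μ[X | m] ω l)) (j : Fin N) :
    ∀ᵐ ω ∂μ, 0 < μ[X | m] ω j → c ω ≤ d ω j - ∑ l, d ω l * μ[X | m] ω l := by
  set p := μ[X | m]
  have hp : Measurable[m] p := stronglyMeasurable_condExp.measurable
  set A := {ω | 0 < p ω j ∧ d ω j - ∑ l, d ω l * p ω l < c ω}
  have hA : MeasurableSet[m] A := by
    have hpj : Measurable[m] fun ω => p ω j := by fun_prop
    have hdp : Measurable[m] fun ω => d ω j - ∑ l, d ω l * p ω l := by fun_prop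
    exact (measurableSet_lt (mδ := m) measurable_const hpj).inter
      (measurableSet_lt (mδ := m) hdp hc)
  have hXA : ∀ᵐ ω ∂μ, ω ∈ A → X ω j = 0 := by
    filter_upwards [h] with ω hω hωA
    obtain ⟨i, hi⟩ := hX ω
    rcases eq_or_ne j i with rfl | hji
    · rw [hi, sum_mul_single_sub] at hω
      exact absurd hω (not_le.2 hωA.2)
    · simp [hi, hji]
  have hpA := ae_condExp_eq_zero_on_of_ae_eq_zero_on (m := m)
    ((ContinuousLinearMap.proj (R := ℝ) (φ := fun _ : Fin N => ℝ) j).integrable_comp hXint)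
    hA hXA
  filter_upwards [hpA, (ContinuousLinearMap.proj j).comp_condExp_comm hXint (m := m)]
    with ω hω hcomm hpos
  by_contra hlt
  exact hpos.ne' (hcomm.trans (hω ⟨hpos, not_le.1 hlt⟩))

theorem ae_le_Jmin_condExp [IsFiniteMeasure μ] (hm : m ≤ m0)
    (hX : ∀ ω, ∃ i, X ω = Pi.single i 1) (hXint : Integrable X μ)
    {c : Ω → ℝ} {d : Ω → Fin N → ℝ} (hc : Measurable[m] c) (hd : Measurable[m] d)
    (h : ∀ᵐ ω ∂μ, c ω ≤ ∑ l, d ω l * (X ω l - μ[X | m] ω l)) :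
    ∀ᵐ ω ∂μ, c ω ≤ Jmin (μ[X | m] ω) (d ω) := by
  filter_upwards [ae_all_iff.2 (ae_le_of_condExp_pos hX hXint hc hd h),
    ae_sum_condExp_eq_one hm hX hXint] with ω hle hsum
  refine le_Jmin ?_ hle
  by_contra! hnonpos
  linarith [Finset.sum_nonpos fun l (_ : l ∈ Finset.univ) => hnonpos l]

end BasisValued

section BSDE

variable {Ω E : Type*} {m0 : MeasurableSpace Ω} {μ : Measure Ω} [AddCommGroup E]
  {T : ℕ} {Y f g : ℕ → Ω → E} {Q : Ω → E}

theorem ae_eq_terminal_of_backward_sum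
    (hsol : ∀ t ≤ T, ∀ᵐ ω ∂μ,
      Y t ω - ∑ u ∈ Finset.Ico t T, f u ω + ∑ u ∈ Finset.Ico t T, g u ω = Q ω) :
    ∀ᵐ ω ∂μ, Y T ω = Q ω := by
  simpa using hsol T le_rfl

theorem ae_one_step_of_backward_sum
    (hsol : ∀ t ≤ T, ∀ᵐ ω ∂μ,
      Y t ω - ∑ u ∈ Finset.Ico t T, f u ω + ∑ u ∈ Finset.Ico t T, g u ω = Q ω)
    {t : ℕ} (ht : t < T) :
    ∀ᵐ ω ∂μ, Y t ω - f t ω + g t ω = Y (t + 1) ω := by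
  filter_upwards [hsol t ht.le, hsol (t + 1) ht] with ω h h1
  rw [Finset.sum_eq_sum_Ico_succ_bot ht, Finset.sum_eq_sum_Ico_succ_bot ht, ← h1] at h
  rw [← sub_eq_zero, ← sub_eq_zero.2 h]
  abel

end BSDE

theorem comparison_theorem_general
    {Ω : Type*} {m0 : MeasurableSpace Ω} {μ : Measure Ω} [IsProbabilityMeasure μ]
    {N K T : ℕ} (𝓕 : Filtration ℕ m0)
    (X : ℕ → Ω → (Fin N → ℝ))
    (hXval : ∀ t ω, ∃ i : Fin N, X t ω = fun j => if j = i then (1 : ℝ) else 0)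
    (hXint : ∀ t, Integrable (X t) μ)
    (M : ℕ → Ω → (Fin N → ℝ))
    (hM : ∀ t, M t = X t - μ[X t | 𝓕 (t - 1)])
    (F1 F2 : Ω → ℕ → (Fin K → ℝ) → (Fin K → Fin N → ℝ) → (Fin K → ℝ))
    -- both drivers satisfy the conditions of the existence theorem
    (hFmeas : ∀ F' ∈ [F1, F2], ∀ t < T, ∀ (Y : Ω → Fin K → ℝ) (Z : Ω → Fin K → Fin N → ℝ),
      StronglyMeasurable[𝓕 t] Y → StronglyMeasurable[𝓕 t] Z →
      StronglyMeasurable[𝓕 t] (fun ω => F' ω t (Y ω) (Z ω)))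
    -- the two solutions
    (Q1 Q2 : Ω → Fin K → ℝ)
    (Y1 Y2 : ℕ → Ω → Fin K → ℝ) (Z1 Z2 : ℕ → Ω → Fin K → Fin N → ℝ)
    (hY1 : ∀ t, StronglyMeasurable[𝓕 t] (Y1 t)) (hZ1 : ∀ t, StronglyMeasurable[𝓕 t] (Z1 t))
    (hY2 : ∀ t, StronglyMeasurable[𝓕 t] (Y2 t)) (hZ2 : ∀ t, StronglyMeasurable[𝓕 t] (Z2 t))
    (hsol1 : ∀ t ≤ T, ∀ᵐ ω ∂μ,
      Y1 t ω - ∑ u ∈ Finset.Ico t T, F1 ω u (Y1 u ω) (Z1 u ω)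
        + ∑ u ∈ Finset.Ico t T, (fun i => ∑ j, Z1 u ω i j * M (u + 1) ω j) = Q1 ω)
    (hsol2 : ∀ t ≤ T, ∀ᵐ ω ∂μ,
      Y2 t ω - ∑ u ∈ Finset.Ico t T, F2 ω u (Y2 u ω) (Z2 u ω)
        + ∑ u ∈ Finset.Ico t T, (fun i => ∑ j, Z2 u ω i j * M (u + 1) ω j) = Q2 ω)
    -- (i) Q¹ ≥ Q² a.s.
    (hQ : ∀ᵐ ω ∂μ, ∀ i, Q2 ω i ≤ Q1 ω i)
    -- (ii) F¹(ω,t,Y²,Z²) ≥ F²(ω,t,Y²,Z²) a.s.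
    (hii : ∀ t < T, ∀ᵐ ω ∂μ, ∀ i,
      F2 ω t (Y2 t ω) (Z2 t ω) i ≤ F1 ω t (Y2 t ω) (Z2 t ω) i)
    -- (iii)
    (hiii : ∀ t < T, ∀ᵐ ω ∂μ, ∀ i,
      Jmin ((μ[X (t + 1) | 𝓕 t]) ω) (fun j => Z1 t ω i j - Z2 t ω i j)
        ≤ F1 ω t (Y2 t ω) (Z1 t ω) i - F1 ω t (Y2 t ω) (Z2 t ω) i)
    -- (iv)
    (hiv : ∀ t < T, ∀ᵐ ω ∂μ,
      (∀ i, Y2 t ω i - F1 ω t (Y2 t ω) (Z1 t ω) i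
          ≤ Y1 t ω i - F1 ω t (Y1 t ω) (Z1 t ω) i) →
      ∀ i, Y2 t ω i ≤ Y1 t ω i) :
    ∀ t ≤ T, ∀ᵐ ω ∂μ, ∀ i, Y2 t ω i ≤ Y1 t ω i := by
  have hX : ∀ t ω, ∃ i, X t ω = Pi.single i 1 := fun t ω =>
    (hXval t ω).imp fun i hi => hi.trans (funext fun j => (Pi.single_apply i 1 j).symm)
  intro t ht
  induction ht using Nat.decreasingInduction with
  | self =>
    filter_upwards [ae_eq_terminal_of_backward_sum hsol1, ae_eq_terminal_of_backward_sum hsol2, hQ]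
      with ω h1 h2 hQω
    simpa [h1, h2] using hQω
  | of_succ t ht ih =>
    have hF1 : ∀ {Y Z}, StronglyMeasurable[𝓕 t] Y → StronglyMeasurable[𝓕 t] Z →
        StronglyMeasurable[𝓕 t] fun ω => F1 ω t (Y ω) (Z ω) := hFmeas F1 (by simp) t ht _ _
    let G := fun ω => F1 ω t (Y2 t ω) (Z1 t ω) - F1 ω t (Y2 t ω) (Z2 t ω)
    let D := fun ω => (Y1 t ω - F1 ω t (Y1 t ω) (Z1 t ω)) - (Y2 t ω - F1 ω t (Y2 t ω) (Z1 t ω))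
    have hGD_meas : StronglyMeasurable[𝓕 t] (G - D) :=
      ((hF1 (hY2 t) (hZ1 t)).sub (hF1 (hY2 t) (hZ2 t))).sub
        (((hY1 t).sub (hF1 (hY1 t) (hZ1 t))).sub ((hY2 t).sub (hF1 (hY2 t) (hZ1 t))))
    have hGD : ∀ᵐ ω ∂μ, ∀ i,
        (G - D) ω i ≤ ∑ l, (Z1 t - Z2 t) ω i l * (X (t + 1) ω l - μ[X (t + 1) | 𝓕 t] ω l) := by
      filter_upwards [ae_one_step_of_backward_sum hsol1 ht, ae_one_step_of_backward_sum hsol2 ht, hii t ht, ih]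
        with ω h1 h2 hF hY i
      have h1i := congrFun h1 i
      have h2i := congrFun h2 i
      simp only [hM (t + 1), G, D, Pi.add_apply, Pi.sub_apply, add_tsub_cancel_right, sub_mul,
        Finset.sum_sub_distrib] at h1i h2i ⊢
      linarith [hF i, hY i]
    have hJ : ∀ᵐ ω ∂μ, ∀ i, (G - D) ω i ≤ Jmin (μ[X (t + 1) | 𝓕 t] ω) ((Z1 t - Z2 t) ω i) :=
      ae_all_iff.2 fun i => ae_le_Jmin_condExp (𝓕.le t) (hX (t + 1)) (hXint (t + 1))
        ((measurable_pi_apply i).comp hGD_meas.measurable)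
        ((measurable_pi_apply i).comp ((hZ1 t).sub (hZ2 t)).measurable)
        (hGD.mono fun ω h => h i)
    filter_upwards [hJ, hiii t ht, hiv t ht] with ω hJω hiiiω hivω
    refine hivω fun i => ?_
    have := (hJω i).trans (hiiiω i)
    simp only [G, D, Pi.sub_apply] at this
    linarith

/-- the comparison theorem for discrete BSDEs. -/
theorem comparison_theorem
    {Ω : Type*} {m0 : MeasurableSpace Ω} {μ : Measure Ω} [IsProbabilityMeasure μ]
    {N K T : ℕ} (𝓕 : Filtration ℕ m0)
    (X : ℕ → Ω → (Fin N → ℝ))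
    (hXval : ∀ t ω, ∃ i : Fin N, X t ω = fun j => if j = i then (1 : ℝ) else 0)
    (h𝓕 : ∀ t, (𝓕 t : MeasurableSpace Ω)
      = MeasurableSpace.comap (fun ω (s : Fin (t + 1)) => X (s : ℕ) ω) inferInstance)
    (hXint : ∀ t, Integrable (X t) μ)
    (M : ℕ → Ω → (Fin N → ℝ))
    (hM : ∀ t, M t = X t - μ[X t | 𝓕 (t - 1)])
    (F1 F2 : Ω → ℕ → (Fin K → ℝ) → (Fin K → Fin N → ℝ) → (Fin K → ℝ))
    -- both drivers satisfy the conditions of the existence theorem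
    (hFmeas : ∀ F' ∈ [F1, F2], ∀ t < T, ∀ (Y : Ω → Fin K → ℝ) (Z : Ω → Fin K → Fin N → ℝ),
      StronglyMeasurable[𝓕 t] Y → StronglyMeasurable[𝓕 t] Z →
      StronglyMeasurable[𝓕 t] (fun ω => F' ω t (Y ω) (Z ω)))
    (hFinv : ∀ F' ∈ [F1, F2], ∀ t < T,
      ∀ (Y : Ω → Fin K → ℝ) (Za Zb : Ω → Fin K → Fin N → ℝ),
      (∀ᵐ ω ∂μ, (fun i => ∑ j, Za ω i j * M (t + 1) ω j)
          = (fun i => ∑ j, Zb ω i j * M (t + 1) ω j)) →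
      ∀ᵐ ω ∂μ, F' ω t (Y ω) (Za ω) = F' ω t (Y ω) (Zb ω))
    (hFbij : ∀ F' ∈ [F1, F2], ∀ t < T, ∀ Z : Ω → Fin K → Fin N → ℝ,
      ∀ᵐ ω ∂μ, Function.Bijective (fun y : Fin K → ℝ => y - F' ω t y (Z ω)))
    -- the two solutions
    (Q1 Q2 : Ω → Fin K → ℝ)
    (hQ1meas : StronglyMeasurable[𝓕 T] Q1) (hQ2meas : StronglyMeasurable[𝓕 T] Q2)
    (Y1 Y2 : ℕ → Ω → Fin K → ℝ) (Z1 Z2 : ℕ → Ω → Fin K → Fin N → ℝ)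
    (hY1 : ∀ t, StronglyMeasurable[𝓕 t] (Y1 t)) (hZ1 : ∀ t, StronglyMeasurable[𝓕 t] (Z1 t))
    (hY2 : ∀ t, StronglyMeasurable[𝓕 t] (Y2 t)) (hZ2 : ∀ t, StronglyMeasurable[𝓕 t] (Z2 t))
    (hsol1 : ∀ t ≤ T, ∀ᵐ ω ∂μ,
      Y1 t ω - ∑ u ∈ Finset.Ico t T, F1 ω u (Y1 u ω) (Z1 u ω)
        + ∑ u ∈ Finset.Ico t T, (fun i => ∑ j, Z1 u ω i j * M (u + 1) ω j) = Q1 ω)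
    (hsol2 : ∀ t ≤ T, ∀ᵐ ω ∂μ,
      Y2 t ω - ∑ u ∈ Finset.Ico t T, F2 ω u (Y2 u ω) (Z2 u ω)
        + ∑ u ∈ Finset.Ico t T, (fun i => ∑ j, Z2 u ω i j * M (u + 1) ω j) = Q2 ω)
    -- (i) Q¹ ≥ Q² a.s.
    (hQ : ∀ᵐ ω ∂μ, ∀ i, Q2 ω i ≤ Q1 ω i)
    -- (ii) F¹(ω,t,Y²,Z²) ≥ F²(ω,t,Y²,Z²) a.s.
    (hii : ∀ t < T, ∀ᵐ ω ∂μ, ∀ i,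
      F2 ω t (Y2 t ω) (Z2 t ω) i ≤ F1 ω t (Y2 t ω) (Z2 t ω) i)
    -- (iii)
    (hiii : ∀ t < T, ∀ᵐ ω ∂μ, ∀ i,
      Jmin ((μ[X (t + 1) | 𝓕 t]) ω) (fun j => Z1 t ω i j - Z2 t ω i j)
        ≤ F1 ω t (Y2 t ω) (Z1 t ω) i - F1 ω t (Y2 t ω) (Z2 t ω) i)
    -- (iv)
    (hiv : ∀ t < T, ∀ᵐ ω ∂μ,
      (∀ i, Y2 t ω i - F1 ω t (Y2 t ω) (Z1 t ω) i
          ≤ Y1 t ω i - F1 ω t (Y1 t ω) (Z1 t ω) i) →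
      ∀ i, Y2 t ω i ≤ Y1 t ω i) :
    ∀ t ≤ T, ∀ᵐ ω ∂μ, ∀ i, Y2 t ω i ≤ Y1 t ω i :=
  comparison_theorem_general 𝓕 X hXval hXint M hM F1 F2 hFmeas Q1 Q2 Y1 Y2 Z1 Z2 hY1 hZ1 hY2 hZ2
    hsol1 hsol2 hQ hii hiii hiv
end
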